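/- arXiv:1609.01649 — 7 statements merged into one kernel-verified Lean document; each statement's English description precedes it below -/
import Mathlib

section
/- Let E ⊆ ℝ² have finite 1-dimensional Hausdorff measure and let L ⊆ ℝ² be a line segment. Then the Lebesgue measure of the set ⋃_{p ∈ L} (p + E) is at most C · H¹(E) · H¹(L) for an absolute constant C > 0. -/
/-!
The swept set is the Minkowski sum `L + E`. Cover `E` by countably many sets `tₙ` of diameter
at most `δ` with `∑ diam tₙ ≤ H¹(E) + δ`. If `diam tₙ ≤ r`, then `tₙ` lies in a ball of radius
`r` and `L` is covered by at most `|L| / r + 3` balls of radius `r`, so `L + tₙ` is covered by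
as many balls of radius `2r`, of total area `O(r (|L| + r))`. Summing over `n` (with `r`
slightly above `diam tₙ`) gives `|L + E| ≤ 16 (H¹(E) + 2δ) (|L| + 6δ)`; let `δ → 0`.
-/

open MeasureTheory Set ENNReal NNReal Metric Pointwise Filter Topology

theorem exists_mem_range_dist_div_le {u : ℝ} (hu : u ∈ Icc (0 : ℝ) 1) {N : ℕ} (hN : 0 < N) :
    ∃ j ∈ Finset.range (N + 1), dist u (j / N) ≤ 1 / N := by
  have hN' : (0 : ℝ) < N := by exact_mod_cast hN
  refine ⟨⌊u * N⌋₊, Finset.mem_range_succ_iff.2 (Nat.floor_le_of_le ?_), ?_⟩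
  · nlinarith [hu.2]
  have h₁ := Nat.floor_le (mul_nonneg hu.1 hN'.le)
  have h₂ := Nat.lt_floor_add_one (u * N)
  have h : u - ⌊u * N⌋₊ / N = (u * N - ⌊u * N⌋₊) / N := by field_simp
  rw [Real.dist_eq, h, abs_div, abs_of_pos hN', div_le_div_iff_of_pos_right hN', abs_le]
  constructor <;> linarith

theorem segment_subset_biUnion_closedBall {F : Type*} [SeminormedAddCommGroup F] [NormedSpace ℝ F]
    (a b : F) {r : ℝ} (hr : 0 < r) :
    ∃ s : Finset F, (s.card : ℝ) ≤ dist a b / r + 3 ∧ segment ℝ a b ⊆ ⋃ q ∈ s, closedBall q r := by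
  classical
  set N := ⌈dist a b / r⌉₊ + 1
  have hN : (0 : ℝ) < N := by positivity
  have hN_le : (N : ℝ) ≤ dist a b / r + 2 := by
    have := Nat.ceil_lt_add_one (div_nonneg dist_nonneg hr.le : 0 ≤ dist a b / r)
    push_cast [N]; linarith
  have hdist : dist a b ≤ N * r := by
    rw [← div_le_iff₀ hr]
    exact (Nat.le_ceil _).trans (by push_cast [N]; linarith)
  refine ⟨(Finset.range (N + 1)).image fun j : ℕ => AffineMap.lineMap a b ((j : ℝ) / N), ?_, ?_⟩
  · calc ((Finset.range (N + 1)).image _).card ≤ ((N + 1 : ℕ) : ℝ) := by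
          exact_mod_cast Finset.card_image_le.trans (Finset.card_range _).le
      _ ≤ dist a b / r + 3 := by push_cast; linarith
  · rw [segment_eq_image_lineMap]
    rintro _ ⟨u, hu, rfl⟩
    obtain ⟨j, hj, hju⟩ := exists_mem_range_dist_div_le hu (N := N) (by exact_mod_cast hN)
    simp only [mem_iUnion, mem_closedBall, exists_prop]
    refine ⟨_, Finset.mem_image_of_mem _ hj, ?_⟩
    rw [dist_lineMap_lineMap]
    calc dist u (j / N) * dist a b ≤ 1 / N * (N * r) :=
          mul_le_mul hju hdist dist_nonneg (by positivity)
      _ = r := by field_simp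

theorem add_subset_biUnion_closedBall {F : Type*} [SeminormedAddCommGroup F]
    {S s t : Set F} {x₀ : F} {r : ℝ} (hS : S ⊆ ⋃ q ∈ s, closedBall q r)
    (ht : t ⊆ closedBall x₀ r) :
    S + t ⊆ ⋃ q ∈ s, closedBall (q + x₀) (2 * r) := by
  rintro _ ⟨p, hp, x, hx, rfl⟩
  obtain ⟨q, hq, hpq⟩ := mem_iUnion₂.1 (hS hp)
  refine mem_iUnion₂.2 ⟨q, hq, (dist_add_add_le p x q x₀).trans ?_⟩
  linarith [mem_closedBall.1 hpq, mem_closedBall.1 (ht hx)]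

theorem volume_biUnion_closedBall_le (s : Finset ℂ) (x₀ : ℂ) {r : ℝ} (hr : 0 ≤ r) :
    volume (⋃ q ∈ s, closedBall (q + x₀) r) ≤ ENNReal.ofReal (s.card * (r ^ 2 * Real.pi)) := by
  calc volume (⋃ q ∈ s, closedBall (q + x₀) r)
      ≤ ∑ q ∈ s, volume (closedBall (q + x₀) r) := measure_biUnion_finset_le _ _
    _ = ENNReal.ofReal (s.card * (r ^ 2 * Real.pi)) := by
      rw [ENNReal.ofReal_mul (by positivity), ENNReal.ofReal_natCast,
        ENNReal.ofReal_mul (by positivity), ENNReal.ofReal_pow hr, ← NNReal.coe_real_pi,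
        ENNReal.ofReal_coe_nnreal]
      simp only [Complex.volume_closedBall, Finset.sum_const, nsmul_eq_mul]

theorem volume_segment_add_le_of_ediam_le (t : Set ℂ) (a b : ℂ) {r : ℝ} (hr : 0 < r)
    (ht : ediam t ≤ ENNReal.ofReal r) :
    volume (segment ℝ a b + t) ≤ 16 * ENNReal.ofReal r * (edist a b + 3 * ENNReal.ofReal r) := by
  rcases t.eq_empty_or_nonempty with rfl | ⟨x₀, hx₀⟩
  · simp
  obtain ⟨s, hcard, hseg⟩ := segment_subset_biUnion_closedBall a b hr
  have hball : t ⊆ closedBall x₀ r := fun x hx =>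
    mem_closedBall.2 ((edist_le_ofReal hr.le).1 ((edist_le_ediam_of_mem hx hx₀).trans ht))
  have hcard' : (s.card : ℝ) * r ≤ dist a b + 3 * r := by
    have := mul_le_mul_of_nonneg_right hcard hr.le
    rwa [add_mul, div_mul_cancel₀ _ hr.ne'] at this
  have hrhs : 16 * ENNReal.ofReal r * (edist a b + 3 * ENNReal.ofReal r) =
      ENNReal.ofReal (16 * r * (dist a b + 3 * r)) := by
    rw [edist_dist, ENNReal.ofReal_mul (by positivity),
      ENNReal.ofReal_add dist_nonneg (by positivity), ENNReal.ofReal_mul (by norm_num),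
      ENNReal.ofReal_mul (by norm_num)]
    norm_num
  calc volume (segment ℝ a b + t) ≤ volume (⋃ q ∈ s, closedBall (q + x₀) (2 * r)) :=
        measure_mono (add_subset_biUnion_closedBall hseg hball)
    _ ≤ ENNReal.ofReal (s.card * ((2 * r) ^ 2 * Real.pi)) :=
        volume_biUnion_closedBall_le s x₀ (by positivity)
    _ ≤ 16 * ENNReal.ofReal r * (edist a b + 3 * ENNReal.ofReal r) := by
      rw [hrhs]
      refine ENNReal.ofReal_le_ofReal ?_
      have := mul_le_mul_of_nonneg_left hcard' (by positivity : 0 ≤ 4 * Real.pi * r)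
      have := mul_nonneg (sub_nonneg.2 Real.pi_le_four) (by positivity : 0 ≤ r * (dist a b + 3 * r))
      nlinarith

theorem exists_cover_tsum_ediam_rpow_lt {X : Type*} [EMetricSpace X] [MeasurableSpace X]
    [BorelSpace X] {d : ℝ} (hd : 0 < d) {s : Set X} (hs : μH[d] s ≠ ⊤) {δ ε : ℝ≥0∞}
    (hδ : 0 < δ) (hε : ε ≠ 0) :
    ∃ t : ℕ → Set X, s ⊆ ⋃ n, t n ∧ (∀ n, ediam (t n) ≤ δ) ∧
      ∑' n, ediam (t n) ^ d < μH[d] s + ε := by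
  have hlt : (⨅ (t : ℕ → Set X) (_ : s ⊆ ⋃ n, t n) (_ : ∀ n, ediam (t n) ≤ δ),
      ∑' n, ⨆ _ : (t n).Nonempty, ediam (t n) ^ d) < μH[d] s + ε := by
    refine lt_of_le_of_lt ?_ (ENNReal.lt_add_right hs hε)
    rw [Measure.hausdorffMeasure_apply]
    exact le_iSup₂ (f := fun (r : ℝ≥0∞) (_ : 0 < r) =>
      ⨅ (t : ℕ → Set X) (_ : s ⊆ ⋃ n, t n) (_ : ∀ n, ediam (t n) ≤ r),
        ∑' n, ⨆ _ : (t n).Nonempty, ediam (t n) ^ d) δ hδ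
  simp only [iInf_lt_iff] at hlt
  obtain ⟨t, hcov, hdiam, hsum⟩ := hlt
  refine ⟨t, hcov, hdiam, lt_of_le_of_lt (ENNReal.tsum_le_tsum fun n => ?_) hsum⟩
  rcases (t n).eq_empty_or_nonempty with h | h
  · simp [h, hd]
  · exact le_iSup (fun _ : (t n).Nonempty => ediam (t n) ^ d) h

theorem volume_segment_add_le_of_hausdorffMeasure_ne_top {E : Set ℂ} (hE : μH[1] E ≠ ⊤)
    (a b : ℂ) {δ : ℝ≥0} (hδ : 0 < δ) :
    volume (segment ℝ a b + E) ≤ 16 * (μH[1] E + 2 * δ) * (edist a b + 6 * δ) := by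
  have hδ₀ : (δ : ℝ≥0∞) ≠ 0 := by simpa using hδ.ne'
  obtain ⟨t, hcov, hdiam, hsum⟩ :=
    exists_cover_tsum_ediam_rpow_lt one_pos hE (ENNReal.coe_pos.2 hδ) hδ₀
  simp only [ENNReal.rpow_one] at hsum
  -- `diam tₙ` may vanish, so the radii are padded to `ρ n > 0` at a total cost of `δ`.
  obtain ⟨η, hη_pos, hη_sum⟩ := ENNReal.exists_pos_sum_of_countable' hδ₀ ℕ
  set ρ : ℕ → ℝ≥0∞ := fun n => ediam (t n) + η n
  have hρ_le : ∀ n, ρ n ≤ 2 * δ := fun n => by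
    rw [two_mul]
    exact add_le_add (hdiam n) ((ENNReal.le_tsum n).trans hη_sum.le)
  have hρ_sum : ∑' n, ρ n ≤ μH[1] E + 2 * δ := by
    rw [ENNReal.tsum_add, two_mul, ← add_assoc]
    exact add_le_add hsum.le hη_sum.le
  have hpiece : ∀ n, volume (segment ℝ a b + t n) ≤ 16 * ρ n * (edist a b + 6 * δ) := by
    intro n
    have hρ_top : ρ n ≠ ⊤ := ne_top_of_le_ne_top (by simp [ENNReal.mul_eq_top]) (hρ_le n)
    have hρ_pos : 0 < (ρ n).toReal :=
      ENNReal.toReal_pos ((hη_pos n).trans_le le_add_self).ne' hρ_top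
    calc volume (segment ℝ a b + t n) ≤ 16 * ρ n * (edist a b + 3 * ρ n) := by
          simpa only [ofReal_toReal hρ_top] using volume_segment_add_le_of_ediam_le (t n) a b
            hρ_pos (by rw [ofReal_toReal hρ_top]; exact le_self_add)
      _ ≤ 16 * ρ n * (edist a b + 6 * δ) := by
          gcongr _ * (_ + ?_)
          calc 3 * ρ n ≤ 3 * (2 * δ) := by gcongr; exact hρ_le n
            _ = 6 * δ := by ring
  calc volume (segment ℝ a b + E) ≤ volume (⋃ n, segment ℝ a b + t n) :=
        measure_mono (add_iUnion (segment ℝ a b) t ▸ add_subset_add_left hcov)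
    _ ≤ ∑' n, volume (segment ℝ a b + t n) := measure_iUnion_le _
    _ ≤ ∑' n, 16 * ρ n * (edist a b + 6 * δ) := ENNReal.tsum_le_tsum hpiece
    _ = 16 * (∑' n, ρ n) * (edist a b + 6 * δ) := by
        rw [ENNReal.tsum_mul_right, ENNReal.tsum_mul_left]
    _ ≤ 16 * (μH[1] E + 2 * δ) * (edist a b + 6 * δ) := by gcongr

/-- Translating a set `E ⊆ ℝ²` of finite `H¹` measure along a line segment `L`
sweeps out a set of area at most `C · H¹(E) · H¹(L)` for an absolute constant `C`. -/
theorem translation_sweep_bound :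
    ∃ C : ℝ≥0∞, 0 < C ∧ C ≠ ⊤ ∧
      ∀ (E : Set ℂ) (a b : ℂ), μH[1] E ≠ ⊤ →
        volume (⋃ p ∈ segment ℝ a b, (fun x => p + x) '' E) ≤
          C * μH[1] E * μH[1] (segment ℝ a b) := by
  refine ⟨16, by norm_num, by norm_num, fun E a b hE => ?_⟩
  rw [iUnion_add_left_image, hausdorffMeasure_segment]
  have hlim : Tendsto (fun δ : ℝ≥0 => 16 * (μH[1] E + 2 * δ) * (edist a b + 6 * δ))
      (𝓝[>] 0) (𝓝 (16 * μH[1] E * edist a b)) := by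
    lift μH[1] E to ℝ≥0 using hE with M
    lift edist a b to ℝ≥0 using edist_ne_top a b with K
    have hcont : Continuous fun δ : ℝ≥0 => 16 * (M + 2 * δ) * (K + 6 * δ) := by fun_prop
    simpa using (ENNReal.tendsto_coe.2 (hcont.tendsto 0)).mono_left nhdsWithin_le_nhds
  exact ge_of_tendsto hlim (eventually_nhdsWithin_of_forall fun δ hδ =>
    volume_segment_add_le_of_hausdorffMeasure_ne_top hE a b hδ)
end

section
/- Let f : ℝ → ℝ be Lipschitz with Lipschitz constant at most δ, let R be a subset of the graph of f (i.e., R ⊆ {(x, f(x)) : x ∈ ℝ}) with H¹(R) < ∞, and let v = (|v|, 0) be a horizontal vector. Then the Lebesgue measure of ⋃_{t ∈ [0,1]} (t·v + R) is at most C · δ · H¹(R) · |v| for an absolute constant C > 0. -/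
/-!
Cover `R` by countably many pieces of diameter at most `r` whose diameters add up to less than
`H¹(R) + r`. A piece of diameter `d` lies on the graph of a `δ`-Lipschitz function, hence in a box
of size `2d × 2δd`, and its sweep along `v` in a box of size `(2d + 2|v|) × 2δd`. Summing over the
pieces bounds the swept area by `2(r + |v|) · 2δ · (H¹(R) + r)`, and `r → 0` gives `C = 4`.
-/

open MeasureTheory Set ENNReal Metric

theorem Complex.volume_reProdIm (s t : Set ℝ) : volume (s ×ℂ t) = volume s * volume t := by
  rw [show s ×ℂ t = measurableEquivRealProd ⁻¹' (s ×ˢ t) from rfl,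
    volume_preserving_equiv_real_prod.measure_preimage_equiv, Measure.volume_eq_prod,
    Measure.prod_prod]

theorem exists_iUnion_eq_tsum_ediam_rpow_lt {X : Type*} [EMetricSpace X] [MeasurableSpace X]
    [BorelSpace X] {d : ℝ} (hd : 0 < d) {s : Set X} {r c : ℝ≥0∞} (hr : 0 < r)
    (hc : μH[d] s < c) :
    ∃ t : ℕ → Set X, ⋃ n, t n = s ∧ (∀ n, ediam (t n) ≤ r) ∧ ∑' n, ediam (t n) ^ d < c := by
  have hpre : (⨅ (t : ℕ → Set X) (_ : s ⊆ ⋃ n, t n) (_ : ∀ n, ediam (t n) ≤ r),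
      ∑' n, ⨆ _ : (t n).Nonempty, ediam (t n) ^ d) < c := by
    refine lt_of_le_of_lt ?_ hc
    rw [Measure.hausdorffMeasure_apply]
    exact le_iSup₂_of_le r hr le_rfl
  simp only [iInf_lt_iff] at hpre
  obtain ⟨t, hst, htr, hsum⟩ := hpre
  refine ⟨fun n => s ∩ t n, by rw [← inter_iUnion, inter_eq_left.2 hst],
    fun n => (ediam_mono inter_subset_right).trans (htr n), lt_of_le_of_lt ?_ hsum⟩
  refine ENNReal.tsum_le_tsum fun n => ?_
  rcases (t n).eq_empty_or_nonempty with he | hne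
  · simp [he, ENNReal.zero_rpow_of_pos hd]
  · rw [iSup_pos hne]
    exact ENNReal.rpow_le_rpow (ediam_mono inter_subset_right) hd.le

def horizontalSweep (v : ℝ) (S : Set ℂ) : Set ℂ :=
  ⋃ t ∈ Icc (0 : ℝ) 1, (fun z => (t * v : ℂ) + z) '' S

theorem horizontalSweep_iUnion (v : ℝ) (S : ℕ → Set ℂ) :
    horizontalSweep v (⋃ n, S n) = ⋃ n, horizontalSweep v (S n) := by
  simp only [horizontalSweep, image_iUnion]
  rw [iUnion_comm]
  simp_rw [iUnion_comm (ι := ℕ)]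

theorem horizontalSweep_subset_reProdIm {δ : NNReal} {f : ℝ → ℝ} (hf : LipschitzWith δ f)
    {S : Set ℂ} (hS : S ⊆ {z | z.im = f z.re}) {z₀ : ℂ} (hz₀ : z₀ ∈ S) {d : ℝ}
    (hd : ∀ z ∈ S, dist z z₀ ≤ d) (v : ℝ) :
    horizontalSweep v S ⊆
      Icc (z₀.re - (d + |v|)) (z₀.re + (d + |v|)) ×ℂ Icc (z₀.im - δ * d) (z₀.im + δ * d) := by
  simp only [horizontalSweep, subset_def, mem_iUnion, mem_image]
  rintro _ ⟨t, ht, z, hz, rfl⟩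
  have hre : |z.re - z₀.re| ≤ d :=
    (Complex.abs_re_le_norm (z - z₀)).trans (dist_eq_norm z z₀ ▸ hd z hz)
  have him : |z.im - z₀.im| ≤ δ * d := by
    rw [hS hz, hS hz₀, ← Real.dist_eq]
    exact (hf.dist_le_mul _ _).trans (mul_le_mul_of_nonneg_left hre δ.coe_nonneg)
  have htv : |t * v| ≤ |v| := by
    rw [abs_mul, abs_of_nonneg ht.1]
    exact mul_le_of_le_one_left (abs_nonneg v) ht.2
  rw [abs_le] at hre him htv
  simp only [Complex.mem_reProdIm, Complex.add_re, Complex.add_im, Complex.mul_re,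
    Complex.mul_im, Complex.ofReal_re, Complex.ofReal_im, mem_Icc]
  refine ⟨⟨?_, ?_⟩, ?_, ?_⟩ <;> linarith

theorem volume_horizontalSweep_le {δ : NNReal} {f : ℝ → ℝ} (hf : LipschitzWith δ f)
    {S : Set ℂ} (hS : S ⊆ {z | z.im = f z.re}) {r : ℝ} (hr : 0 ≤ r)
    (hSr : ediam S ≤ ENNReal.ofReal r) (v : ℝ) :
    volume (horizontalSweep v S) ≤ ENNReal.ofReal (2 * (r + |v|) * (2 * δ)) * ediam S := by
  rcases S.eq_empty_or_nonempty with rfl | ⟨z₀, hz₀⟩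
  · simp [horizontalSweep]
  have hfin : ediam S ≠ ⊤ := ne_top_of_le_ne_top ofReal_ne_top hSr
  set d := (ediam S).toReal
  have hdr : d ≤ r := toReal_le_of_le_ofReal hr hSr
  have hd : ∀ z ∈ S, dist z z₀ ≤ d := fun z hz => by
    rw [dist_edist]
    exact toReal_mono hfin (edist_le_ediam_of_mem hz hz₀)
  calc volume (horizontalSweep v S)
      ≤ ENNReal.ofReal (2 * (d + |v|)) * ENNReal.ofReal (2 * (δ * d)) := by
        refine (measure_mono (horizontalSweep_subset_reProdIm hf hS hz₀ hd v)).trans_eq ?_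
        rw [Complex.volume_reProdIm, Real.volume_Icc, Real.volume_Icc]
        ring_nf
    _ ≤ ENNReal.ofReal (2 * (r + |v|) * (2 * δ)) * ediam S := by
        rw [← ofReal_toReal hfin, ← ENNReal.ofReal_mul (by positivity),
          ← ENNReal.ofReal_mul (by positivity)]
        refine ENNReal.ofReal_le_ofReal ?_
        nlinarith [mul_nonneg δ.coe_nonneg (toReal_nonneg : 0 ≤ d)]

theorem volume_horizontalSweep_le_of_hausdorffMeasure_lt {δ : NNReal} {f : ℝ → ℝ}
    (hf : LipschitzWith δ f) {R : Set ℂ} (hR : R ⊆ {z | z.im = f z.re}) {r c : ℝ} (hr : 0 < r)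
    (hc : μH[1] R < ENNReal.ofReal c) (v : ℝ) :
    volume (horizontalSweep v R) ≤ ENNReal.ofReal (2 * (r + |v|) * (2 * δ) * c) := by
  obtain ⟨t, rfl, htr, hsum⟩ :=
    exists_iUnion_eq_tsum_ediam_rpow_lt one_pos (ofReal_pos.2 hr) hc
  simp only [ENNReal.rpow_one] at hsum
  calc volume (horizontalSweep v (⋃ n, t n))
      ≤ ∑' n, volume (horizontalSweep v (t n)) := by
        rw [horizontalSweep_iUnion]
        exact measure_iUnion_le _
    _ ≤ ∑' n, ENNReal.ofReal (2 * (r + |v|) * (2 * δ)) * ediam (t n) :=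
        ENNReal.tsum_le_tsum fun n =>
          volume_horizontalSweep_le hf ((subset_iUnion t n).trans hR) hr.le (htr n) v
    _ = ENNReal.ofReal (2 * (r + |v|) * (2 * δ)) * ∑' n, ediam (t n) := ENNReal.tsum_mul_left
    _ ≤ ENNReal.ofReal (2 * (r + |v|) * (2 * δ)) * ENNReal.ofReal c := by gcongr
    _ = ENNReal.ofReal (2 * (r + |v|) * (2 * δ) * c) := (ENNReal.ofReal_mul (by positivity)).symm

theorem le_ofReal_of_forall_pos_le {a : ℝ≥0∞} {g : ℝ → ℝ} (hg : ContinuousAt g 0)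
    (h : ∀ r > 0, a ≤ ENNReal.ofReal (g r)) : a ≤ ENNReal.ofReal (g 0) :=
  ge_of_tendsto (ENNReal.tendsto_ofReal (hg.tendsto.mono_left (nhdsWithin_le_nhds (s := Ioi 0))))
    (eventually_nhdsWithin_of_forall h)

/-- If `f : ℝ → ℝ` is Lipschitz with constant at most `δ`, `R` is a subset of the graph
of `f` with finite `H¹` measure, and `v` is a horizontal vector, then translating `R`
along the segment from `0` to `v` sweeps out area at most `C · δ · H¹(R) · |v|`. -/
theorem graph_translation_sweep_bound :
    ∃ C : ℝ, 0 < C ∧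
      ∀ (δ : NNReal) (f : ℝ → ℝ), LipschitzWith δ f →
        ∀ R : Set ℂ, R ⊆ {z : ℂ | z.im = f z.re} → μH[1] R ≠ ⊤ →
          ∀ v : ℝ,
            volume (⋃ t ∈ Set.Icc (0:ℝ) 1, (fun z => (t * v : ℂ) + z) '' R) ≤
              ENNReal.ofReal (C * δ * |v|) * μH[1] R := by
  refine ⟨4, by norm_num, fun δ f hf R hR hfin v => ?_⟩
  set m := (μH[1] R).toReal
  have hm : μH[1] R = ENNReal.ofReal m := (ofReal_toReal hfin).symm
  have hsweep : ∀ r > 0,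
      volume (horizontalSweep v R) ≤ ENNReal.ofReal (2 * (r + |v|) * (2 * δ) * (m + r)) :=
    fun r hr => volume_horizontalSweep_le_of_hausdorffMeasure_lt hf hR hr
      (hm ▸ (ofReal_lt_ofReal_iff (by positivity)).2 (by linarith)) v
  calc volume (horizontalSweep v R)
      ≤ ENNReal.ofReal (2 * (0 + |v|) * (2 * δ) * (m + 0)) :=
        le_ofReal_of_forall_pos_le (g := fun r => 2 * (r + |v|) * (2 * δ) * (m + r))
          (by fun_prop) hsweep
    _ = ENNReal.ofReal (4 * δ * |v|) * μH[1] R := by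
        rw [hm, ← ofReal_mul (by positivity)]
        ring_nf
end

section
/- Let x_j = (w_j, φ_j) ∈ ℝ³ \ {0} for j = 1, 2, 3 with x₃ = x₁ ⋆ x₂ and |φ_j| ≤ 1 for each j. Then |w₁ + w₂ − w₃| ≤ C·(|w₂||φ₁| + |w₁||φ₁| + |w₂||φ₂| + |w₃||φ₃|) for an absolute constant C > 0. -/
/-- For `x = (w, φ)`, the displacement of the origin: `v = w(1 − e^{iφ})/φ` if `φ ≠ 0`,
`v = −i w` if `φ = 0`. -/
noncomputable def vOf (x : ℂ × ℝ) : ℂ :=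
  if x.2 = 0 then -Complex.I * x.1
  else x.1 * (1 - Complex.exp (x.2 * Complex.I)) / (x.2 : ℂ)

/-- The relation `x₃ = x₁ ⋆ x₂`: angles add, and `v₁ + e^{iφ₁} v₂ = v₃`. -/
def starRel (x y z : ℂ × ℝ) : Prop :=
  z.2 = x.2 + y.2 ∧ vOf x + Complex.exp (x.2 * Complex.I) * vOf y = vOf z

/-! Since `(1 - e^{iφ}) / φ = -i + O(φ)`, each `v_j` is `-i w_j` up to an error of size
`‖w_j‖ |φ_j|`. Substituting this into `v₁ + e^{iφ₁} v₂ = v₃` leaves `w₁ + w₂ - w₃` equal to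
these three errors plus `(e^{iφ₁} - 1) w₂`, and `‖e^{iφ₁} - 1‖ ≤ |φ₁|`; so `C = 1` works. -/

open Complex

lemma norm_vOf_add_I_mul_le (w : ℂ) {φ : ℝ} (hφ : |φ| ≤ 1) :
    ‖vOf (w, φ) + I * w‖ ≤ ‖w‖ * |φ| := by
  rcases eq_or_ne φ 0 with rfl | hφ0
  · simp [vOf]
  have hφ0' : (φ : ℂ) ≠ 0 := by exact_mod_cast hφ0
  have hnorm : ‖(φ : ℂ) * I‖ = |φ| := by simp
  have htaylor : ‖exp (φ * I) - 1 - φ * I‖ ≤ |φ| ^ 2 := by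
    simpa only [hnorm] using norm_exp_sub_one_sub_id_le (hnorm.trans_le hφ)
  have hdev : vOf (w, φ) + I * w = -(w / φ) * (exp (φ * I) - 1 - φ * I) := by
    simp only [vOf, if_neg hφ0]
    field_simp
    ring
  calc ‖vOf (w, φ) + I * w‖ = ‖w‖ / |φ| * ‖exp (φ * I) - 1 - φ * I‖ := by
        rw [hdev, norm_mul, norm_neg, norm_div, norm_real, Real.norm_eq_abs]
    _ ≤ ‖w‖ / |φ| * |φ| ^ 2 := by gcongr
    _ = ‖w‖ * |φ| := by field_simp

lemma norm_exp_ofReal_mul_I_sub_one_le (φ : ℝ) : ‖exp (φ * I) - 1‖ ≤ |φ| := by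
  simpa only [mul_comm, Real.norm_eq_abs] using Real.norm_exp_I_mul_ofReal_sub_one_le (x := φ)

lemma norm_add_sub_le_of_starRel {w₁ w₂ w₃ : ℂ} {φ₁ φ₂ φ₃ : ℝ}
    (h : starRel (w₁, φ₁) (w₂, φ₂) (w₃, φ₃)) :
    ‖w₁ + w₂ - w₃‖ ≤ ‖vOf (w₁, φ₁) + I * w₁‖ + ‖vOf (w₂, φ₂) + I * w₂‖ +
      ‖vOf (w₃, φ₃) + I * w₃‖ + ‖w₂‖ * |φ₁| := by
  set d₁ := vOf (w₁, φ₁) + I * w₁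
  set d₂ := vOf (w₂, φ₂) + I * w₂
  set d₃ := vOf (w₃, φ₃) + I * w₃
  set e := exp (φ₁ * I)
  have hv : vOf (w₁, φ₁) + e * vOf (w₂, φ₂) = vOf (w₃, φ₃) := h.2
  have hsum : w₁ + w₂ - w₃ = I * (d₃ - d₁ - e * d₂) - (e - 1) * w₂ := by
    linear_combination I * hv + (w₁ + e * w₂ - w₃) * I_sq
  have he_norm : ‖e‖ = 1 := norm_exp_ofReal_mul_I φ₁
  have he_sub : ‖e - 1‖ ≤ |φ₁| := norm_exp_ofReal_mul_I_sub_one_le φ₁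
  calc ‖w₁ + w₂ - w₃‖ ≤ ‖I * (d₃ - d₁ - e * d₂)‖ + ‖(e - 1) * w₂‖ := hsum ▸ norm_sub_le _ _
    _ ≤ ‖d₃‖ + ‖d₁‖ + ‖e‖ * ‖d₂‖ + ‖e - 1‖ * ‖w₂‖ := by
        rw [norm_mul I, norm_I, one_mul, norm_mul (e - 1)]
        gcongr
        exact (norm_sub_le _ _).trans (add_le_add (norm_sub_le _ _) (norm_mul_le _ _))
    _ ≤ ‖d₁‖ + ‖d₂‖ + ‖d₃‖ + ‖w₂‖ * |φ₁| := by
        rw [he_norm, one_mul]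
        linarith [mul_le_mul_of_nonneg_right he_sub (norm_nonneg w₂)]

/-- If `x₃ = x₁ ⋆ x₂` with all `x_j = (w_j, φ_j) ≠ 0` and `|φ_j| ≤ 1`, then
`|w₁ + w₂ − w₃| ≤ C (|w₂||φ₁| + |w₁||φ₁| + |w₂||φ₂| + |w₃||φ₃|)` for an absolute
constant `C > 0`; i.e., `⋆` is close to coordinatewise addition for small angles. -/
theorem star_approx_add :
    ∃ C : ℝ, 0 < C ∧
      ∀ (w₁ w₂ w₃ : ℂ) (φ₁ φ₂ φ₃ : ℝ),
        (w₁, φ₁) ≠ (0 : ℂ × ℝ) → (w₂, φ₂) ≠ (0 : ℂ × ℝ) → (w₃, φ₃) ≠ (0 : ℂ × ℝ) →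
        starRel (w₁, φ₁) (w₂, φ₂) (w₃, φ₃) →
        |φ₁| ≤ 1 → |φ₂| ≤ 1 → |φ₃| ≤ 1 →
        ‖w₁ + w₂ - w₃‖ ≤
          C * (‖w₂‖ * |φ₁| + ‖w₁‖ * |φ₁| + ‖w₂‖ * |φ₂| + ‖w₃‖ * |φ₃|) := by
  refine ⟨1, one_pos, fun w₁ w₂ w₃ φ₁ φ₂ φ₃ _ _ _ hrel h₁ h₂ h₃ => ?_⟩
  have := norm_add_sub_le_of_starRel hrel
  have := norm_vOf_add_I_mul_le w₁ h₁
  have := norm_vOf_add_I_mul_le w₂ h₂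
  have := norm_vOf_add_I_mul_le w₃ h₃
  linarith
end

section
/- Let x, x₀, x₁ ∈ ℝ³ \ {0} with x = x₀ + x₁ (coordinatewise addition). For each N, let y₀ = x₀/N and define ỹ₁ by the equation y₀ ⋆ ỹ₁ = x/N, and set x̃₁ = N·ỹ₁. Then x̃₁ → x₁ as N → ∞; in particular, for every ε > 0 there exists N₀ such that for all N ≥ N₀, |x̃₁ − x₁| < ε and |y₀| < ε and |ỹ₁| < ε. -/
/-! Write `vOf (w, φ) = w · g φ` with `g φ = (1 - e^{iφ}) / φ` and `g 0 = -i`; `g` is continuous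
at `0`, being minus the difference quotient of `t ↦ e^{it}` at `0`. Solving `y₀ ⋆ ỹ₁ = x / N`
gives `ỹ₁ = ((x.1 g (x.2/N) - x₀.1 g (x₀.2/N)) / (N e^{i x₀.2/N} g (x₁.2/N)), x₁.2/N)` once
`g (x₁.2/N) ≠ 0`, so `N ỹ₁ → ((x.1 - x₀.1)(-i)/(-i), x₁.2) = x₁`. -/

open Filter Topology Complex

noncomputable def vFactor (φ : ℝ) : ℂ :=
  if φ = 0 then -I else (1 - exp (φ * I)) / φ

lemma vOf_eq_mul_vFactor (x : ℂ × ℝ) : vOf x = x.1 * vFactor x.2 := by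
  unfold vOf vFactor
  split_ifs <;> ring

lemma hasDerivAt_exp_ofReal_mul_I_zero : HasDerivAt (fun t : ℝ => exp (t * I)) I 0 := by
  simpa using ((hasDerivAt_mul_const I).cexp (x := (0 : ℂ))).comp_ofReal

lemma vFactor_eq_neg_dslope : vFactor = -dslope (fun t : ℝ => exp (t * I)) 0 := by
  ext1 φ
  rcases eq_or_ne φ 0 with rfl | hφ
  · simp [vFactor, hasDerivAt_exp_ofReal_mul_I_zero.deriv]
  · rw [Pi.neg_apply, dslope_of_ne _ hφ, slope_def_module, vFactor, if_neg hφ]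
    simp only [sub_zero, Complex.ofReal_zero, zero_mul, Complex.exp_zero, Complex.real_smul,
      Complex.ofReal_inv]
    ring

lemma continuousAt_vFactor_zero : ContinuousAt vFactor 0 := by
  rw [vFactor_eq_neg_dslope]
  exact (continuousAt_dslope_same.mpr hasDerivAt_exp_ofReal_mul_I_zero.differentiableAt).neg

@[simp] lemma vFactor_zero : vFactor 0 = -I := if_pos rfl

noncomputable def starLeftDiv (y z : ℂ × ℝ) : ℂ × ℝ :=
  ((vOf z - vOf y) / (exp (y.2 * I) * vFactor (z.2 - y.2)), z.2 - y.2)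

lemma starRel.eq_starLeftDiv {y t z : ℂ × ℝ} (h : starRel y t z)
    (hz : vFactor (z.2 - y.2) ≠ 0) : t = starLeftDiv y z := by
  obtain ⟨h₂, h₁⟩ := h
  have ht₂ : t.2 = z.2 - y.2 := by linarith
  refine Prod.ext ?_ ht₂
  rw [vOf_eq_mul_vFactor t] at h₁
  rw [starLeftDiv, eq_div_iff (mul_ne_zero (exp_ne_zero _) hz), ← ht₂]
  linear_combination h₁

lemma inv_smul_starLeftDiv_smul {c : ℝ} (hc : c ≠ 0) (y z : ℂ × ℝ) :
    c⁻¹ • starLeftDiv (c • y) (c • z) =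
      ((z.1 * vFactor (c * z.2) - y.1 * vFactor (c * y.2)) /
        (exp ((c * y.2 : ℝ) * I) * vFactor (c * (z.2 - y.2))), z.2 - y.2) := by
  simp only [starLeftDiv, vOf_eq_mul_vFactor, Prod.smul_fst, Prod.smul_snd, smul_eq_mul,
    Complex.real_smul, ← mul_sub, Prod.smul_mk]
  refine Prod.ext ?_ (by field_simp)
  push_cast
  field_simp
  exact mul_div_mul_left _ _ (by exact_mod_cast hc)

lemma tendsto_inv_smul_starLeftDiv_smul (y z : ℂ × ℝ) :
    Tendsto (fun c : ℝ => c⁻¹ • starLeftDiv (c • y) (c • z)) (𝓝[≠] 0) (𝓝 (z - y)) := by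
  have hF : ∀ a : ℝ, Tendsto (fun c : ℝ => vFactor (c * a)) (𝓝 0) (𝓝 (-I)) := fun a => by
    rw [← vFactor_zero]
    exact continuousAt_vFactor_zero.tendsto.comp
      ((continuous_mul_const a).tendsto' 0 0 (zero_mul a))
  have hE : Tendsto (fun c : ℝ => exp ((c * y.2 : ℝ) * I)) (𝓝 0) (𝓝 1) :=
    (by fun_prop : Continuous fun c : ℝ => exp ((c * y.2 : ℝ) * I)).tendsto' 0 1 (by simp)
  have hlim : Tendsto (fun c : ℝ => ((z.1 * vFactor (c * z.2) - y.1 * vFactor (c * y.2)) /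
        (exp ((c * y.2 : ℝ) * I) * vFactor (c * (z.2 - y.2))), z.2 - y.2)) (𝓝 0) (𝓝 (z - y)) := by
    refine Tendsto.prodMk_nhds ?_ tendsto_const_nhds
    have h := (((hF z.2).const_mul z.1).sub ((hF y.2).const_mul y.1)).div
      (hE.mul (hF (z.2 - y.2))) (by simp)
    rwa [show (z.1 * -I - y.1 * -I) / (1 * -I) = z.1 - y.1 by field_simp; ring] at h
  exact (hlim.mono_left nhdsWithin_le_nhds).congr'
    (eventually_nhdsWithin_of_forall fun c hc => (inv_smul_starLeftDiv_smul hc y z).symm)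

lemma eventually_vFactor_smul_sub_smul_ne_zero (y z : ℂ × ℝ) :
    ∀ᶠ c in 𝓝 (0 : ℝ), vFactor ((c • z).2 - (c • y).2) ≠ 0 := by
  have hcont : ContinuousAt (fun c : ℝ => vFactor ((c • z).2 - (c • y).2)) 0 :=
    continuousAt_vFactor_zero.comp_of_eq (by fun_prop) (by simp)
  exact hcont.eventually_ne (by simp)

lemma tendsto_starLeftDiv_smul (y z : ℂ × ℝ) :
    Tendsto (fun c : ℝ => starLeftDiv (c • y) (c • z)) (𝓝[≠] 0) (𝓝 0) := by
  have hc : Tendsto (fun c : ℝ => c) (𝓝[≠] 0) (𝓝 0) := nhdsWithin_le_nhds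
  have h := hc.smul (tendsto_inv_smul_starLeftDiv_smul y z)
  rw [zero_smul] at h
  refine h.congr' (eventually_nhdsWithin_of_forall fun c hc => ?_)
  exact smul_inv_smul₀ hc _

lemma eventually_starRel_smul {ε : ℝ} (hε : 0 < ε) (y z : ℂ × ℝ) :
    ∀ᶠ c in 𝓝[≠] (0 : ℝ), ∀ t, starRel (c • y) t (c • z) →
      ‖c⁻¹ • t - (z - y)‖ < ε ∧ ‖c • y‖ < ε ∧ ‖t‖ < ε := by
  have hc : Tendsto (fun c : ℝ => c) (𝓝[≠] 0) (𝓝 0) := nhdsWithin_le_nhds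
  have hsmall : Tendsto (fun c : ℝ => c • y) (𝓝[≠] 0) (𝓝 0) := by
    simpa using hc.smul_const y
  filter_upwards [eventually_nhdsWithin_of_eventually_nhds
      (eventually_vFactor_smul_sub_smul_ne_zero y z),
    Metric.tendsto_nhds.mp (tendsto_inv_smul_starLeftDiv_smul y z) ε hε,
    Metric.tendsto_nhds.mp hsmall ε hε, Metric.tendsto_nhds.mp (tendsto_starLeftDiv_smul y z) ε hε]
    with c hsolv hcorr hsmall hdiv t ht
  rw [dist_eq_norm] at hcorr
  rw [dist_zero_right] at hsmall hdiv
  rw [ht.eq_starLeftDiv hsolv]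
  exact ⟨hcorr, hsmall, hdiv⟩

theorem zigzag_correction_tendsto_general
    (x x₀ x₁ : ℂ × ℝ)
    (hadd : x = x₀ + x₁) :
    ∀ ε : ℝ, 0 < ε → ∃ N₀ : ℕ, ∀ N : ℕ, N₀ ≤ N →
      ∀ ty₁ : ℂ × ℝ, starRel (((N : ℝ)⁻¹) • x₀) ty₁ (((N : ℝ)⁻¹) • x) →
        ‖(N : ℝ) • ty₁ - x₁‖ < ε ∧ ‖((N : ℝ)⁻¹) • x₀‖ < ε ∧ ‖ty₁‖ < ε := by
  subst hadd
  intro ε hε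
  have hinv : Tendsto (fun N : ℕ => (N : ℝ)⁻¹) atTop (𝓝[≠] 0) :=
    tendsto_nhdsWithin_iff.mpr ⟨tendsto_inv_atTop_nhds_zero_nat,
      (eventually_ne_atTop 0).mono fun N hN => inv_ne_zero (Nat.cast_ne_zero.mpr hN)⟩
  obtain ⟨N₀, hN₀⟩ :=
    eventually_atTop.mp (hinv.eventually (eventually_starRel_smul hε x₀ (x₀ + x₁)))
  refine ⟨N₀, fun N hN ty₁ hty => ?_⟩
  simpa only [inv_inv, add_sub_cancel_left] using hN₀ N hN ty₁ hty

/-- Basic zigzag correction for rotations: if `x = x₀ + x₁` (coordinatewise) with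
`x, x₀, x₁ ≠ 0`, `y₀ = x₀/N`, and `ty₁` satisfies `y₀ ⋆ ty₁ = x/N`, then
`x̃₁ := N ty₁ → x₁` as `N → ∞`: for every `ε > 0` there is `N₀` such that for all
`N ≥ N₀`, `|x̃₁ − x₁| < ε`, `|y₀| < ε` and `|ty₁| < ε`. -/
theorem zigzag_correction_tendsto
    (x x₀ x₁ : ℂ × ℝ) (hx : x ≠ 0) (hx₀ : x₀ ≠ 0) (hx₁ : x₁ ≠ 0)
    (hadd : x = x₀ + x₁) :
    ∀ ε : ℝ, 0 < ε → ∃ N₀ : ℕ, ∀ N : ℕ, N₀ ≤ N →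
      ∀ ty₁ : ℂ × ℝ, starRel (((N : ℝ)⁻¹) • x₀) ty₁ (((N : ℝ)⁻¹) • x) →
        ‖(N : ℝ) • ty₁ - x₁‖ < ε ∧ ‖((N : ℝ)⁻¹) • x₀‖ < ε ∧ ‖ty₁‖ < ε :=
  zigzag_correction_tendsto_general x x₀ x₁ hadd
end

section
/- Let r > 0 and let E ⊆ B(0, r) ⊆ ℝ² be a set of finite H¹-measure. Then there is a constant c depending only on r such that for every rotation ρ around a center z ∈ ℝ² with angle φ ≠ 0, the set swept by E under the continuous rotation from angle 0 to φ around z has Lebесgue measure at most c · H¹(E) · |φ| · √(1 + |z|²). -/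
open MeasureTheory Set ENNReal

/-!
Cover `E` by sets `A` of diameter at most `R`. Rotations are isometries, so the sweep of `A` stays
within `ediam A` of the orbit of any `x ∈ A`, an arc of length `|φ| ‖x - z‖ ≤ |φ| (r + ‖z‖)`.
Covering that arc by about `1 + |φ| ‖x - z‖ / ediam A` discs of radius `2 ediam A` bounds the swept
area by `4π (|φ| (r + ‖z‖) + 3R) ediam A`. Since sweeping commutes with unions,
`A ↦ volume (sweep z φ A)` is an outer measure, so `OuterMeasure.le_mkMetric` turns the bound into
one by `μH[1] E`; letting `R → 0` and using `r + ‖z‖ ≤ (r + 1) √(1 + ‖z‖²)` finishes.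
-/

open Metric NNReal Real

lemma norm_exp_mul_I_sub_exp_mul_I_le (a b : ℝ) :
    ‖Complex.exp (a * Complex.I) - Complex.exp (b * Complex.I)‖ ≤ |a - b| := by
  have h : Complex.exp (a * Complex.I) - Complex.exp (b * Complex.I) =
      Complex.exp (b * Complex.I) * (Complex.exp (Complex.I * (a - b : ℝ)) - 1) := by
    rw [mul_sub, ← Complex.exp_add]; push_cast; ring_nf
  rw [h, norm_mul, Complex.norm_exp_ofReal_mul_I, one_mul, ← Real.norm_eq_abs]
  exact Real.norm_exp_I_mul_ofReal_sub_one_le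

noncomputable def rotateAbout (z : ℂ) (θ : ℝ) (u : ℂ) : ℂ :=
  Complex.exp (θ * Complex.I) * (u - z) + z

lemma isometry_rotateAbout (z : ℂ) (θ : ℝ) : Isometry (rotateAbout z θ) :=
  Isometry.of_dist_eq fun u v => by
    simp only [rotateAbout, dist_eq_norm, add_sub_add_right_eq_sub, ← mul_sub,
      sub_sub_sub_cancel_right, norm_mul, Complex.norm_exp_ofReal_mul_I, one_mul]

lemma lipschitzWith_rotateAbout_mul (z u : ℂ) (φ : ℝ) :
    LipschitzWith (‖u - z‖₊ * ‖φ‖₊) fun t : ℝ => rotateAbout z (t * φ) u := by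
  refine LipschitzWith.of_dist_le_mul fun a b => ?_
  simp only [rotateAbout, dist_eq_norm, add_sub_add_right_eq_sub, ← sub_mul, norm_mul]
  calc _ ≤ |a * φ - b * φ| * ‖u - z‖ := by gcongr; exact norm_exp_mul_I_sub_exp_mul_I_le _ _
    _ = _ := by simp [← sub_mul, abs_mul]; ring

lemma exists_abs_sub_div_le {t : ℝ} (ht : t ∈ Icc (0 : ℝ) 1) {n : ℕ} (hn : 0 < n) :
    ∃ j ≤ n, |t - j / n| ≤ 1 / n := by
  have hn' : (0 : ℝ) < n := Nat.cast_pos.2 hn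
  refine ⟨⌊t * n⌋₊, ?_, ?_⟩
  · exact Nat.floor_le_of_le (by nlinarith [ht.2])
  · have h₁ : (⌊t * n⌋₊ : ℝ) ≤ t * n := Nat.floor_le (by nlinarith [ht.1])
    have h₂ : t * n < ⌊t * n⌋₊ + 1 := Nat.lt_floor_add_one _
    have h_eq : t - ⌊t * n⌋₊ / n = (t * n - ⌊t * n⌋₊) * (1 / n) := by field_simp
    rw [h_eq, abs_mul, abs_of_pos (by positivity : (0 : ℝ) < 1 / n)]
    exact mul_le_of_le_one_left (by positivity) (abs_le.2 ⟨by linarith, by linarith⟩)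

lemma LipschitzOnWith.biUnion_closedBall_subset {X : Type*} [PseudoMetricSpace X] {γ : ℝ → X}
    {K : ℝ≥0} (hγ : LipschitzOnWith K γ (Icc 0 1)) (s : ℝ) {n : ℕ} (hn : 0 < n) :
    ⋃ t ∈ Icc (0 : ℝ) 1, closedBall (γ t) s ⊆
      ⋃ j ∈ Finset.range (n + 1), closedBall (γ (j / n)) (s + K / n) := by
  simp only [iUnion_subset_iff]
  intro t ht w hw
  obtain ⟨j, hjn, hj⟩ := exists_abs_sub_div_le ht hn
  have hj_mem : (j / n : ℝ) ∈ Icc (0 : ℝ) 1 :=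
    ⟨by positivity, div_le_one_of_le₀ (by exact_mod_cast hjn) (Nat.cast_nonneg n)⟩
  refine mem_biUnion (Finset.mem_range_succ_iff.2 hjn) (mem_closedBall.2 ?_)
  calc dist w (γ (j / n)) ≤ dist w (γ t) + dist (γ t) (γ (j / n)) := dist_triangle _ _ _
    _ ≤ s + K * (1 / n) := by
        gcongr
        · exact mem_closedBall.1 hw
        · exact (hγ.dist_le_mul t ht _ hj_mem).trans (by rw [Real.dist_eq]; gcongr)
    _ = s + K / n := by ring

lemma LipschitzOnWith.volume_biUnion_closedBall_le {γ : ℝ → ℂ} {K : ℝ≥0}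
    (hγ : LipschitzOnWith K γ (Icc 0 1)) {s : ℝ} (hs : 0 < s) :
    volume (⋃ t ∈ Icc (0 : ℝ) 1, closedBall (γ t) s) ≤
      ENNReal.ofReal (4 * π * s * (K + 3 * s)) := by
  set n : ℕ := ⌈K / s⌉₊ + 1 with hn_def
  have hn : 0 < n := Nat.succ_pos _
  have hn' : (0 : ℝ) < n := Nat.cast_pos.2 hn
  have hK_le : (K : ℝ) / s ≤ n := by
    rw [hn_def]; push_cast; linarith [Nat.le_ceil ((K : ℝ) / s)]
  have hn_le : (n : ℝ) + 1 ≤ K / s + 3 := by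
    rw [hn_def]; push_cast; linarith [Nat.ceil_lt_add_one (by positivity : (0 : ℝ) ≤ K / s)]
  have hKn : (K : ℝ) / n ≤ s := by
    rw [div_le_iff₀ hn']; rwa [div_le_iff₀ hs, mul_comm] at hK_le
  calc volume (⋃ t ∈ Icc (0 : ℝ) 1, closedBall (γ t) s)
      ≤ volume (⋃ j ∈ Finset.range (n + 1), closedBall (γ (j / n)) (s + K / n)) :=
        measure_mono (hγ.biUnion_closedBall_subset s hn)
    _ ≤ ∑ j ∈ Finset.range (n + 1), volume (closedBall (γ (j / n)) (s + K / n)) :=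
        measure_biUnion_finset_le _ _
    _ = ENNReal.ofReal ((n + 1) * (π * (s + K / n) ^ 2)) := by
        simp_rw [Complex.volume_closedBall]
        rw [Finset.sum_const, Finset.card_range, nsmul_eq_mul,
          ENNReal.ofReal_mul (by positivity), ENNReal.ofReal_mul (by positivity),
          ENNReal.ofReal_pow (by positivity), ← ENNReal.ofReal_natCast,
          ← ENNReal.ofReal_coe_nnreal, NNReal.coe_real_pi]
        push_cast
        ring
    _ ≤ ENNReal.ofReal (4 * π * s * (K + 3 * s)) := by
        refine ENNReal.ofReal_le_ofReal ?_
        calc ((n : ℝ) + 1) * (π * (s + K / n) ^ 2) ≤ (K / s + 3) * (π * (2 * s) ^ 2) := by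
              gcongr; linarith
          _ = 4 * π * s * (K + 3 * s) := by field_simp; ring

def sweep (z : ℂ) (φ : ℝ) (A : Set ℂ) : Set ℂ :=
  ⋃ t ∈ Icc (0 : ℝ) 1, rotateAbout z (t * φ) '' A

section Sweep

variable {z : ℂ} {φ : ℝ}

lemma sweep_empty : sweep z φ ∅ = ∅ := by
  simp [sweep]

lemma sweep_mono : Monotone (sweep z φ) :=
  fun _ _ h => iUnion₂_mono fun _ _ => image_mono h

lemma sweep_iUnion {ι : Sort*} (A : ι → Set ℂ) : sweep z φ (⋃ i, A i) = ⋃ i, sweep z φ (A i) := by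
  ext w
  simp only [sweep, image_iUnion, mem_iUnion]
  exact ⟨fun ⟨t, ht, i, h⟩ => ⟨i, t, ht, h⟩, fun ⟨i, t, ht, h⟩ => ⟨t, ht, i, h⟩⟩

lemma sweep_subset_biUnion_closedBall {A : Set ℂ} {x : ℂ} (hx : x ∈ A) {s : ℝ} (hs : 0 ≤ s)
    (hA : ediam A ≤ ENNReal.ofReal s) :
    sweep z φ A ⊆ ⋃ t ∈ Icc (0 : ℝ) 1, closedBall (rotateAbout z (t * φ) x) s := by
  simp only [sweep, iUnion_subset_iff, image_subset_iff]
  intro t ht u hu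
  refine mem_biUnion ht (mem_closedBall.2 ?_)
  rw [(isometry_rotateAbout z _).dist_eq]
  exact (edist_le_ofReal hs).1 ((edist_le_ediam_of_mem hu hx).trans hA)

lemma volume_sweep_le_of_ediam_le {A : Set ℂ} {x : ℂ} (hx : x ∈ A) {s : ℝ} (hs : 0 < s)
    (hA : ediam A ≤ ENNReal.ofReal s) :
    volume (sweep z φ A) ≤ ENNReal.ofReal (4 * π * s * (‖x - z‖ * |φ| + 3 * s)) := by
  refine (measure_mono (sweep_subset_biUnion_closedBall hx hs.le hA)).trans ?_
  simpa using (lipschitzWith_rotateAbout_mul z x φ).lipschitzOnWith.volume_biUnion_closedBall_le hs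

lemma volume_sweep_le_mul_ediam {A : Set ℂ} {x : ℂ} (hx : x ∈ A) {R : ℝ} (hR : 0 < R)
    (hA : ediam A ≤ ENNReal.ofReal R) :
    volume (sweep z φ A) ≤
      ENNReal.ofReal (4 * π * (‖x - z‖ * |φ| + 3 * R)) * ediam A := by
  rcases eq_or_ne (ediam A) 0 with h0 | h0
  · have hf : ContinuousWithinAt
        (fun s : ℝ => ENNReal.ofReal (4 * π * s * (‖x - z‖ * |φ| + 3 * s))) (Ioi 0) 0 :=
      (ENNReal.continuous_ofReal.comp (by fun_prop)).continuousWithinAt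
    simpa [h0] using ge_of_tendsto hf (eventually_nhdsWithin_of_forall fun s hs =>
      volume_sweep_le_of_ediam_le hx hs (h0 ▸ zero_le))
  · have hfin : ediam A ≠ ⊤ := ne_top_of_le_ne_top ofReal_ne_top hA
    set s := (ediam A).toReal
    have hs : 0 < s := toReal_pos h0 hfin
    have hsR : s ≤ R := toReal_le_of_le_ofReal hR.le hA
    calc volume (sweep z φ A) ≤ ENNReal.ofReal (4 * π * s * (‖x - z‖ * |φ| + 3 * s)) :=
          volume_sweep_le_of_ediam_le hx hs (ofReal_toReal hfin).ge
      _ ≤ ENNReal.ofReal (4 * π * (‖x - z‖ * |φ| + 3 * R) * s) :=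
          ENNReal.ofReal_le_ofReal (by rw [mul_right_comm]; gcongr)
      _ = ENNReal.ofReal (4 * π * (‖x - z‖ * |φ| + 3 * R)) * ediam A := by
          rw [ENNReal.ofReal_mul (by positivity), ofReal_toReal hfin]

lemma volume_sweep_inter_le {r : ℝ} {E A : Set ℂ} (hE : E ⊆ ball 0 r) {R : ℝ} (hR : 0 < R)
    (hA : ediam A ≤ ENNReal.ofReal R) :
    volume (sweep z φ (A ∩ E)) ≤
      ENNReal.ofReal (4 * π * ((r + ‖z‖) * |φ| + 3 * R)) * ediam A := by
  rcases (A ∩ E).eq_empty_or_nonempty with h | ⟨x, hx⟩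
  · simp [h, sweep_empty]
  have hxz : ‖x - z‖ ≤ r + ‖z‖ :=
    (norm_sub_le _ _).trans (by gcongr; exact (mem_ball_zero_iff.1 (hE hx.2)).le)
  calc volume (sweep z φ (A ∩ E))
      ≤ ENNReal.ofReal (4 * π * (‖x - z‖ * |φ| + 3 * R)) * ediam (A ∩ E) :=
        volume_sweep_le_mul_ediam hx hR ((ediam_mono inter_subset_left).trans hA)
    _ ≤ _ := by gcongr; exact inter_subset_left

end Sweep

noncomputable def sweepVolume (z : ℂ) (φ : ℝ) : OuterMeasure ℂ where
  measureOf A := volume (sweep z φ A)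
  empty := by rw [sweep_empty, measure_empty]
  mono h := measure_mono (sweep_mono h)
  iUnion_nat A _ := by
    rw [sweep_iUnion]
    exact measure_iUnion_le _

lemma volume_sweep_le_of_subset_ball {r : ℝ} (hr : 0 ≤ r) {E : Set ℂ} (hE : E ⊆ ball 0 r)
    (hE_fin : μH[1] E ≠ ⊤) (z : ℂ) (φ : ℝ) :
    volume (sweep z φ E) ≤ ENNReal.ofReal (4 * π * ((r + ‖z‖) * |φ|)) * μH[1] E := by
  have h_approx : ∀ R > 0, volume (sweep z φ E) ≤
      ENNReal.ofReal (4 * π * ((r + ‖z‖) * |φ| + 3 * R)) * μH[1] E := by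
    intro R hR
    set c := ENNReal.ofReal (4 * π * ((r + ‖z‖) * |φ| + 3 * R))
    have hc : c ≠ 0 := (ofReal_pos.2 (by positivity)).ne'
    have h_le : (sweepVolume z φ).restrict E ≤ OuterMeasure.mkMetric (c • fun d => d ^ (1 : ℝ)) :=
      OuterMeasure.le_mkMetric _ _ (ENNReal.ofReal R) (ofReal_pos.2 hR) fun A hA => by
        simpa [sweepVolume] using volume_sweep_inter_le hE hR hA
    have h_E := h_le E
    rwa [OuterMeasure.mkMetric_smul _ ofReal_ne_top hc, smul_apply,
      OuterMeasure.coe_mkMetric, OuterMeasure.restrict_apply, inter_self, smul_eq_mul] at h_E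
  have hf : ContinuousWithinAt
      (fun R : ℝ => ENNReal.ofReal (4 * π * ((r + ‖z‖) * |φ| + 3 * R)) * μH[1] E) (Ioi 0) 0 :=
    (ENNReal.Tendsto.mul_const ((ENNReal.continuous_ofReal.comp (by fun_prop)).tendsto 0)
      (Or.inr hE_fin)).mono_left nhdsWithin_le_nhds
  simpa using ge_of_tendsto hf (eventually_nhdsWithin_of_forall h_approx)

/-- For `E ⊆ B(0, r)` of finite `H¹` measure there is a constant `c = c(r)` such that
rotating `E` continuously around any center `z` by any total angle `φ ≠ 0` sweeps out
area at most `c · H¹(E) · |φ| · √(1 + |z|²)`. -/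
theorem rotation_sweep_bounded_set (r : ℝ) (hr : 0 < r) :
    ∃ c : ℝ, 0 < c ∧
      ∀ E : Set ℂ, E ⊆ Metric.ball (0 : ℂ) r → μH[1] E ≠ ⊤ →
        ∀ (z : ℂ) (φ : ℝ), φ ≠ 0 →
          volume (⋃ t ∈ Set.Icc (0:ℝ) 1,
              (fun u : ℂ => Complex.exp ((t * φ : ℝ) * Complex.I) * (u - z) + z) '' E) ≤
            ENNReal.ofReal (c * |φ| * Real.sqrt (1 + ‖z‖ ^ 2)) * μH[1] E := by
  refine ⟨4 * π * (r + 1), by positivity, fun E hE hE_fin z φ _ => ?_⟩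
  have h_one : 1 ≤ √(1 + ‖z‖ ^ 2) := Real.one_le_sqrt.2 (le_add_of_nonneg_right (sq_nonneg _))
  have h_norm : ‖z‖ ≤ √(1 + ‖z‖ ^ 2) := Real.le_sqrt_of_sq_le (le_add_of_nonneg_left zero_le_one)
  have h_center : r + ‖z‖ ≤ (r + 1) * √(1 + ‖z‖ ^ 2) := by nlinarith
  calc volume (sweep z φ E) ≤ ENNReal.ofReal (4 * π * ((r + ‖z‖) * |φ|)) * μH[1] E :=
        volume_sweep_le_of_subset_ball hr.le hE hE_fin z φ
    _ ≤ ENNReal.ofReal (4 * π * (r + 1) * |φ| * √(1 + ‖z‖ ^ 2)) * μH[1] E := by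
        gcongr ENNReal.ofReal ?_ * _
        calc 4 * π * ((r + ‖z‖) * |φ|) ≤ 4 * π * ((r + 1) * √(1 + ‖z‖ ^ 2) * |φ|) := by gcongr
          _ = 4 * π * (r + 1) * |φ| * √(1 + ‖z‖ ^ 2) := by ring
end

section
/- Let L ⊆ ℝ² be a segment of length s and direction θ_S, and let θ₀, θ₁ be directions such that θ_S lies strictly between them, with angles α₀, α₁ > 0 from θ_S to θ₀ and θ₁ respectively, and α₀ + α₁ < π/2. Then for every N ≥ 1 there is a polygonal path from one endpoint of L to the other consisting of N segments of direction θ₀ and N segments of direction θ₁ (alternating), each segment of direction θ_j having length s·sin(α_{1−j})/(N·sin(α₀ + α₁)); moreover, for every ε > 0, if N is sufficiently large this polygonal path lies in the ε-neighborhood of L. -/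
/-!
Let `u, v` be the two step vectors. The identity
`sin α₁ · e^{-iα₀} + sin α₀ · e^{iα₁} = sin (α₀ + α₁)` gives `N • (u + v) = b - a`, so the
zigzag starting at `a` with steps `u, v, u, v, …` reaches `b` after `2N` steps, and its
even-indexed vertices `a + j • (u + v)` lie on the segment `[a, b]`. Every other point of
the path is within `‖u‖ + ‖v‖ = O(1/N)` of such a vertex.
-/

open Real Set Filter Metric

section Zigzag

variable {G : Type*} [AddCommGroup G]

def zigzag (a u v : G) (k : ℕ) : G := a + ((k + 1) / 2) • u + (k / 2) • v

theorem zigzag_two_mul (a u v : G) (j : ℕ) : zigzag a u v (2 * j) = a + j • (u + v) := by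
  rw [zigzag, show (2 * j + 1) / 2 = j by omega, show 2 * j / 2 = j by omega, nsmul_add,
    add_assoc]

theorem zigzag_steps (a u v : G) (j : ℕ) :
    zigzag a u v (2 * j + 1) - zigzag a u v (2 * j) = u ∧
      zigzag a u v (2 * j + 2) - zigzag a u v (2 * j + 1) = v := by
  simp only [zigzag, show (2 * j + 1 + 1) / 2 = j + 1 by omega,
    show (2 * j + 1) / 2 = j by omega, show (2 * j + 2 + 1) / 2 = j + 1 by omega,
    show 2 * j / 2 = j by omega, succ_nsmul]
  constructor <;> abel

theorem eq_add_nsmul_of_steps {p : ℕ → G} {u v : G} {N : ℕ}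
    (hstep : ∀ j < N, p (2 * j + 1) - p (2 * j) = u ∧ p (2 * j + 2) - p (2 * j + 1) = v) :
    ∀ j ≤ N, p (2 * j) = p 0 + j • (u + v) := by
  intro j hj
  induction j with
  | zero => simp
  | succ j ih =>
    obtain ⟨hu, hv⟩ := hstep j (by omega)
    rw [show 2 * (j + 1) = 2 * j + 2 by ring, ← sub_add_cancel (p (2 * j + 2)) (p (2 * j + 1)),
      hv, ← sub_add_cancel (p (2 * j + 1)) (p (2 * j)), hu, ih (by omega), succ_nsmul]
    abel

end Zigzag

section Thickening

variable {E : Type*} [SeminormedAddCommGroup E] [NormedSpace ℝ E]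

theorem add_nsmul_mem_segment (a w : E) {j N : ℕ} (hj : j ≤ N) :
    a + j • w ∈ segment ℝ a (a + N • w) := by
  rcases Nat.eq_zero_or_pos N with rfl | hN
  · obtain rfl : j = 0 := by omega
    simp
  have ht : (j / N : ℝ) ∈ Icc (0 : ℝ) 1 :=
    ⟨by positivity, div_le_one_of_le₀ (by exact_mod_cast hj) (Nat.cast_nonneg N)⟩
  convert (convex_segment a (a + N • w)).add_smul_mem (left_mem_segment ℝ _ _)
    (right_mem_segment ℝ _ _) ht using 2
  rw [← Nat.cast_smul_eq_nsmul ℝ, ← Nat.cast_smul_eq_nsmul ℝ, smul_smul,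
    div_mul_cancel₀ _ (by positivity)]

theorem segment_subset_thickening_of_mem_closedBall {S : Set E} {q x y : E} {r ε : ℝ}
    (hq : q ∈ S) (hx : x ∈ closedBall q r) (hy : y ∈ closedBall q r) (hr : r < ε) :
    segment ℝ x y ⊆ thickening ε S :=
  ((convex_closedBall q r).segment_subset hx hy).trans
    ((closedBall_subset_ball hr).trans (ball_subset_thickening hq ε))

theorem iUnion_segment_subset_thickening {S : Set E} {p : ℕ → E} {u v : E} {N : ℕ} {ε : ℝ}
    (hS : ∀ j < N, p (2 * j) ∈ S)
    (hstep : ∀ j < N, p (2 * j + 1) - p (2 * j) = u ∧ p (2 * j + 2) - p (2 * j + 1) = v)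
    (hε : ‖u‖ + ‖v‖ < ε) :
    (⋃ k ∈ Finset.range (2 * N), segment ℝ (p k) (p (k + 1))) ⊆ thickening ε S := by
  simp only [iUnion_subset_iff, Finset.mem_range]
  intro k hk
  obtain ⟨j, hkj⟩ := Nat.even_or_odd' k
  have hj : j < N := by omega
  obtain ⟨hu, hv⟩ := hstep j hj
  have h₀ : p (2 * j) ∈ closedBall (p (2 * j)) (‖u‖ + ‖v‖) :=
    mem_closedBall_self (by positivity)
  have h₁ : p (2 * j + 1) ∈ closedBall (p (2 * j)) (‖u‖ + ‖v‖) := by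
    rw [mem_closedBall, dist_eq_norm, hu]
    exact le_add_of_nonneg_right (norm_nonneg v)
  have h₂ : p (2 * j + 2) ∈ closedBall (p (2 * j)) (‖u‖ + ‖v‖) := by
    rw [mem_closedBall, dist_eq_norm, ← sub_add_sub_cancel _ (p (2 * j + 1)), hu, hv, add_comm v]
    exact norm_add_le u v
  rcases hkj with rfl | rfl
  · exact segment_subset_thickening_of_mem_closedBall (hS j hj) h₀ h₁ hε
  · exact segment_subset_thickening_of_mem_closedBall (hS j hj) h₁ h₂ hε

end Thickening

theorem Complex.sin_mul_exp_neg_add_sin_mul_exp (α β : ℂ) :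
    Complex.sin β * Complex.exp (-α * Complex.I) + Complex.sin α * Complex.exp (β * Complex.I) =
      Complex.sin (α + β) := by
  rw [Complex.exp_mul_I, Complex.exp_mul_I, Complex.cos_neg, Complex.sin_neg, Complex.sin_add]
  ring

theorem nsmul_zigzag_steps_add {s θ α β : ℝ} (hσ : Real.sin (α + β) ≠ 0) {N : ℕ} (hN : N ≠ 0) :
    N • (((s * Real.sin β / (N * Real.sin (α + β)) : ℝ) : ℂ) *
          Complex.exp ((θ - α : ℝ) * Complex.I) +
        ((s * Real.sin α / (N * Real.sin (α + β)) : ℝ) : ℂ) *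
          Complex.exp ((θ + β : ℝ) * Complex.I)) =
      s * Complex.exp (θ * Complex.I) := by
  have hσ' : (Real.sin (α + β) : ℂ) ≠ 0 := Complex.ofReal_ne_zero.mpr hσ
  have hN' : (N : ℂ) ≠ 0 := Nat.cast_ne_zero.mpr hN
  calc _ = s * Complex.exp (θ * Complex.I) / Real.sin (α + β) *
        (Real.sin β * Complex.exp (-α * Complex.I) + Real.sin α * Complex.exp (β * Complex.I)) := by
        push_cast
        rw [nsmul_eq_mul, sub_eq_add_neg, add_mul, add_mul, Complex.exp_add, Complex.exp_add,
          neg_mul]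
        field_simp
    _ = s * Complex.exp (θ * Complex.I) := by
        simp only [Complex.ofReal_sin, Complex.ofReal_add] at hσ' ⊢
        rw [Complex.sin_mul_exp_neg_add_sin_mul_exp, div_mul_cancel₀ _ hσ']

theorem tendsto_norm_ofReal_div_mul_exp (c σ θ : ℝ) :
    Tendsto (fun N : ℕ => ‖((c / (N * σ) : ℝ) : ℂ) * Complex.exp (θ * Complex.I)‖) atTop
      (nhds 0) := by
  have h := (tendsto_const_div_atTop_nhds_zero_nat (c / σ)).norm
  rw [norm_zero] at h
  simpa only [norm_mul, Complex.norm_exp_ofReal_mul_I, mul_one, Complex.norm_real,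
    div_mul_eq_div_div_swap] using h

theorem basic_zigzag_general (a b : ℂ) (s θS α₀ α₁ : ℝ)
    (hab : b = a + (s : ℂ) * Complex.exp ((θS : ℝ) * Complex.I))
    (h₀ : 0 < α₀) (h₁ : 0 < α₁) (hsum : α₀ + α₁ < π / 2) :
    ((∀ N : ℕ, 1 ≤ N → ∃ p : ℕ → ℂ, p 0 = a ∧ p (2 * N) = b ∧
      ∀ j < N,
        p (2 * j + 1) - p (2 * j) =
          ((s * Real.sin α₁ / (N * Real.sin (α₀ + α₁)) : ℝ) : ℂ) *
            Complex.exp (((θS - α₀ : ℝ)) * Complex.I) ∧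
        p (2 * j + 2) - p (2 * j + 1) =
          ((s * Real.sin α₀ / (N * Real.sin (α₀ + α₁)) : ℝ) : ℂ) *
            Complex.exp (((θS + α₁ : ℝ)) * Complex.I)) ∧
    (∀ ε : ℝ, 0 < ε → ∃ N₀ : ℕ, ∀ N : ℕ, N₀ ≤ N → ∀ p : ℕ → ℂ,
      p 0 = a →
      (∀ j < N,
        p (2 * j + 1) - p (2 * j) =
          ((s * Real.sin α₁ / (N * Real.sin (α₀ + α₁)) : ℝ) : ℂ) *
            Complex.exp (((θS - α₀ : ℝ)) * Complex.I) ∧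
        p (2 * j + 2) - p (2 * j + 1) =
          ((s * Real.sin α₀ / (N * Real.sin (α₀ + α₁)) : ℝ) : ℂ) *
            Complex.exp (((θS + α₁ : ℝ)) * Complex.I)) →
      (⋃ j ∈ Finset.range (2 * N), segment ℝ (p j) (p (j + 1))) ⊆
        Metric.thickening ε (segment ℝ a b))) := by
  have hσ : Real.sin (α₀ + α₁) ≠ 0 :=
    (Real.sin_pos_of_pos_of_lt_pi (by linarith) (by linarith [pi_pos])).ne'
  have hb (N : ℕ) (hN : N ≠ 0) : b = a + N • (
      ((s * Real.sin α₁ / (N * Real.sin (α₀ + α₁)) : ℝ) : ℂ) *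
        Complex.exp ((θS - α₀ : ℝ) * Complex.I) +
      ((s * Real.sin α₀ / (N * Real.sin (α₀ + α₁)) : ℝ) : ℂ) *
        Complex.exp ((θS + α₁ : ℝ) * Complex.I)) := by
    rw [hab, nsmul_zigzag_steps_add hσ hN]
  refine ⟨fun N hN => ⟨zigzag a _ _, by simpa using zigzag_two_mul a _ _ 0,
    (zigzag_two_mul a _ _ N).trans (hb N (by omega)).symm, fun j _ => zigzag_steps a _ _ j⟩,
    fun ε hε => ?_⟩
  obtain ⟨N₀, hN₀⟩ := eventually_atTop.mp
    (((tendsto_norm_ofReal_div_mul_exp _ _ _).add (tendsto_norm_ofReal_div_mul_exp _ _ _)).eventually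
      (gt_mem_nhds (by rwa [zero_add])))
  refine ⟨N₀, fun N hN p hp0 hstep => iUnion_segment_subset_thickening (fun j hj => ?_) hstep
    (hN₀ N hN)⟩
  rw [eq_add_nsmul_of_steps hstep j hj.le, hp0, hb N (by omega)]
  exact add_nsmul_mem_segment _ _ hj.le

/-- **Basic zigzag.** Let `L` be the segment from `a` to `b = a + s e^{iθ_S}` (`s > 0`),
and let `θ₀ = θ_S − α₀`, `θ₁ = θ_S + α₁` with `α₀, α₁ > 0` and `α₀ + α₁ < π/2`. Then:
(1) for every `N ≥ 1` there is a polygonal path from `a` to `b` consisting of `N`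
segments of direction `θ₀` alternating with `N` segments of direction `θ₁`, each
segment of direction `θ_j` having length `s·sin(α_{1−j})/(N·sin(α₀+α₁))`;
(2) for every `ε > 0`, if `N` is sufficiently large, any such polygonal path lies in
the `ε`-neighborhood of `L`. -/
theorem basic_zigzag (a b : ℂ) (s θS α₀ α₁ : ℝ)
    (hs : 0 < s) (hab : b = a + (s : ℂ) * Complex.exp ((θS : ℝ) * Complex.I))
    (h₀ : 0 < α₀) (h₁ : 0 < α₁) (hsum : α₀ + α₁ < π / 2) :
    ((∀ N : ℕ, 1 ≤ N → ∃ p : ℕ → ℂ, p 0 = a ∧ p (2 * N) = b ∧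
      ∀ j < N,
        p (2 * j + 1) - p (2 * j) =
          ((s * Real.sin α₁ / (N * Real.sin (α₀ + α₁)) : ℝ) : ℂ) *
            Complex.exp (((θS - α₀ : ℝ)) * Complex.I) ∧
        p (2 * j + 2) - p (2 * j + 1) =
          ((s * Real.sin α₀ / (N * Real.sin (α₀ + α₁)) : ℝ) : ℂ) *
            Complex.exp (((θS + α₁ : ℝ)) * Complex.I)) ∧
    (∀ ε : ℝ, 0 < ε → ∃ N₀ : ℕ, ∀ N : ℕ, N₀ ≤ N → ∀ p : ℕ → ℂ,
      p 0 = a →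
      (∀ j < N,
        p (2 * j + 1) - p (2 * j) =
          ((s * Real.sin α₁ / (N * Real.sin (α₀ + α₁)) : ℝ) : ℂ) *
            Complex.exp (((θS - α₀ : ℝ)) * Complex.I) ∧
        p (2 * j + 2) - p (2 * j + 1) =
          ((s * Real.sin α₀ / (N * Real.sin (α₀ + α₁)) : ℝ) : ℂ) *
            Complex.exp (((θS + α₁ : ℝ)) * Complex.I)) →
      (⋃ j ∈ Finset.range (2 * N), segment ℝ (p j) (p (j + 1))) ⊆
        Metric.thickening ε (segment ℝ a b))) :=
  basic_zigzag_general a b s θS α₀ α₁ hab h₀ h₁ hsum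
end

section
/- Let S² be the unit sphere with its arc-length (geodesic) metric, π : S² → ℙ² the quotient map identifying antipodal points, and equip ℙ² with the quotient metric. Let r > 0 and let x, z ∈ ℙ² be represented by points in the standard embedding ℝ² ⊆ ℙ² with |x| ≤ r (Euclidean norm) and |z| > 2r. Then there are constants c₂, c₃ depending only on r with the following property for all sufficiently small δ > 0: if ℓ₁, ℓ₂ are two projective lines through x both meeting the projective ball B(z, δ), then the Euclidean angle between ℓ₁ ∩ ℝ² and ℓ₂ ∩ ℝ² is at most c₂·c₃·δ; consequently, if a line ν through x meets B(z, δ), then the Euclidean distance from z to ν is at most c·δ·√(1 + |z|²) for a constant c depending only on r. -/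
/-!
A projective line through `x` has a normal `n ⟂ X := (x, 1)`, and its affine trace has direction
`d = (-n₁, n₀)`, with `‖n‖ ≤ ‖X‖ ‖d‖`. If it contains a point `u` with `d(u, Z) < δ`, `Z := (z, 1)`,
then `|⟪n, Z⟫| ≤ ‖n‖ ‖Z‖ δ`: only the component of `Z` orthogonal to `u` contributes, and it has
length `‖Z‖ sin d(u, Z)`. The distance claim is then the point-line distance formula
`dist(z, ν) = |⟪n, Z⟫| / ‖d‖`.

For two such normals, `n₁ × n₂` is orthogonal to both, hence parallel to `X`: it equals
`(n₁ × n₂)₂ • X`, and `|(n₁ × n₂)₂| = ‖d₁‖ ‖d₂‖ sin θ` for the angle `θ` between the traces.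
Crossing with `Z` gives `|(n₁ × n₂)₂| ‖X × Z‖ = ‖⟪n₁, Z⟫ n₂ - ⟪n₂, Z⟫ n₁‖ ≤ 2 ‖n₁‖ ‖n₂‖ ‖Z‖ δ`,
and `‖X × Z‖ ≥ |z - x| ≥ |z| / 2` because `z` is far from `x`. Finally `θ ≤ (π / 2) sin θ`
on `[0, π / 2]`.
-/

open Real

noncomputable section

/-- The standard embedding of `ℝ² ≅ ℂ` into the projective plane, where points of `ℙ²`
are represented by nonzero vectors of `ℝ³` up to scalar: `x ↦ (x₁, x₂, 1)`. -/
def liftP (x : ℂ) : EuclideanSpace ℝ (Fin 3) :=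
  (WithLp.equiv 2 (Fin 3 → ℝ)).symm ![x.re, x.im, 1]

/-- The metric on `ℙ²` induced by the arc-length metric on `S²` via the quotient map
identifying antipodal points: the distance between the points of `ℙ²` represented by
nonzero vectors `u, v ∈ ℝ³` is the acute angle between the lines `ℝu` and `ℝv`. -/
def projDist (u v : EuclideanSpace ℝ (Fin 3)) : ℝ :=
  Real.arccos (|(inner ℝ u v : ℝ)| / (‖u‖ * ‖v‖))

/-- The real inner product on `ℂ ≅ ℝ²`. -/
def realInner (a b : ℂ) : ℝ := a.re * b.re + a.im * b.im

/-- The (Euclidean) angle in `[0, π/2]` between two directions in `ℝ² ≅ ℂ`. -/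
def dirAngle (d₁ d₂ : ℂ) : ℝ :=
  Real.arccos (|realInner d₁ d₂| / (‖d₁‖ * ‖d₂‖))

/-- A direction vector of the affine trace in `ℝ²` of the projective line with
homogeneous normal vector `n`. -/
def dirOf (n : EuclideanSpace ℝ (Fin 3)) : ℂ := ⟨-(n 1), n 0⟩

/-- The affine trace in `ℝ² ⊆ ℙ²` of the projective line with homogeneous normal
vector `n`. -/
def affineTrace (n : EuclideanSpace ℝ (Fin 3)) : Set ℂ :=
  {p : ℂ | (inner ℝ n (liftP p) : ℝ) = 0}

local notation "E3" => EuclideanSpace ℝ (Fin 3)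

lemma inner_eq_sum_three (u v : E3) :
    (inner ℝ u v : ℝ) = u 0 * v 0 + u 1 * v 1 + u 2 * v 2 := by
  simp only [PiLp.inner_apply, RCLike.inner_apply, Real.ringHom_apply, Fin.sum_univ_three]
  ring

lemma norm_sq_eq_sum_three (u : E3) : ‖u‖ ^ 2 = u 0 ^ 2 + u 1 ^ 2 + u 2 ^ 2 := by
  rw [← real_inner_self_eq_norm_sq, inner_eq_sum_three]; ring

namespace EuclideanSpace

open Matrix in
def cross (u v : E3) : E3 := WithLp.toLp 2 (WithLp.ofLp u ⨯₃ WithLp.ofLp v)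

lemma cross_apply_zero (u v : E3) : cross u v 0 = u 1 * v 2 - u 2 * v 1 := rfl

lemma cross_apply_one (u v : E3) : cross u v 1 = u 2 * v 0 - u 0 * v 2 := rfl

lemma cross_apply_two (u v : E3) : cross u v 2 = u 0 * v 1 - u 1 * v 0 := rfl

lemma cross_cross_eq_inner_smul_sub_inner_smul (u v w : E3) :
    cross (cross u v) w = (inner ℝ u w : ℝ) • v - (inner ℝ v w : ℝ) • u := by
  simp only [cross, WithLp.ofLp_toLp, cross_cross_eq_smul_sub_smul,
    EuclideanSpace.inner_eq_star_dotProduct, star_trivial, dotProduct_comm (WithLp.ofLp w)]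
  rfl

lemma cross_smul_left (c : ℝ) (u v : E3) : cross (c • u) v = c • cross u v := by
  simp [cross]

lemma cross_zero_left (v : E3) : cross 0 v = 0 := by
  simp [cross]

end EuclideanSpace

open EuclideanSpace

@[simp] lemma liftP_apply_zero (x : ℂ) : liftP x 0 = x.re := rfl

@[simp] lemma liftP_apply_one (x : ℂ) : liftP x 1 = x.im := rfl

@[simp] lemma liftP_apply_two (x : ℂ) : liftP x 2 = 1 := rfl

lemma inner_liftP (n : E3) (x : ℂ) :
    (inner ℝ n (liftP x) : ℝ) = n 0 * x.re + n 1 * x.im + n 2 := by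
  simp [inner_eq_sum_three]

lemma norm_liftP_sq (x : ℂ) : ‖liftP x‖ ^ 2 = 1 + ‖x‖ ^ 2 := by
  rw [norm_sq_eq_sum_three, Complex.sq_norm, Complex.normSq_apply]
  simp only [liftP_apply_zero, liftP_apply_one, liftP_apply_two]
  ring

lemma norm_liftP (x : ℂ) : ‖liftP x‖ = √(1 + ‖x‖ ^ 2) := by
  rw [← norm_liftP_sq, sqrt_sq (norm_nonneg _)]

lemma liftP_ne_zero (x : ℂ) : liftP x ≠ 0 := by
  intro h
  simpa using congrArg (fun v : E3 => v 2) h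

lemma inner_sq_mul_norm_sq_le {F : Type*} [NormedAddCommGroup F] [InnerProductSpace ℝ F]
    {n u : F} (hnu : (inner ℝ n u : ℝ) = 0) (Z : F) :
    (inner ℝ n Z : ℝ) ^ 2 * ‖u‖ ^ 2
      ≤ ‖n‖ ^ 2 * (‖u‖ ^ 2 * ‖Z‖ ^ 2 - (inner ℝ u Z : ℝ) ^ 2) := by
  rcases eq_or_ne u 0 with rfl | hu
  · simp
  set w : F := ‖u‖ ^ 2 • Z - (inner ℝ u Z : ℝ) • u
  have hnw : (inner ℝ n w : ℝ) = ‖u‖ ^ 2 * inner ℝ n Z := by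
    simp [w, inner_sub_right, real_inner_smul_right, hnu]
  have hw : ‖w‖ ^ 2 = ‖u‖ ^ 2 * (‖u‖ ^ 2 * ‖Z‖ ^ 2 - (inner ℝ u Z : ℝ) ^ 2) := by
    rw [← real_inner_self_eq_norm_sq]
    simp only [w, inner_sub_left, inner_sub_right, real_inner_smul_left, real_inner_smul_right]
    simp only [real_inner_self_eq_norm_sq, real_inner_comm u Z]
    ring
  have hCS : (inner ℝ n w : ℝ) ^ 2 ≤ ‖n‖ ^ 2 * ‖w‖ ^ 2 := by
    rw [← mul_pow, ← sq_abs]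
    exact pow_le_pow_left₀ (abs_nonneg _) (abs_real_inner_le_norm n w) 2
  have hu2 : 0 < ‖u‖ ^ 2 := by positivity
  rw [hnw, hw] at hCS
  nlinarith

lemma abs_inner_le_mul_projDist {n u : E3} (hu : u ≠ 0) (hnu : (inner ℝ n u : ℝ) = 0)
    (Z : E3) : |(inner ℝ n Z : ℝ)| ≤ ‖n‖ * ‖Z‖ * projDist u Z := by
  rcases eq_or_ne Z 0 with rfl | hZ
  · simp
  set q := |(inner ℝ u Z : ℝ)| / (‖u‖ * ‖Z‖)
  have huZ : 0 < ‖u‖ * ‖Z‖ := by positivity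
  have hq : q ≤ 1 := (div_le_one huZ).mpr (abs_real_inner_le_norm u Z)
  have hsin : 1 - q ^ 2 ≤ projDist u Z ^ 2 := by
    have h := sin_sq_le_sq (x := projDist u Z)
    rwa [projDist, sin_arccos, sq_sqrt (sub_nonneg.mpr (pow_le_one₀ (by positivity) hq))] at h
  have hqsq : (inner ℝ u Z : ℝ) ^ 2 = q ^ 2 * (‖u‖ * ‖Z‖) ^ 2 := by
    simp only [q, div_pow, sq_abs]; field_simp
  have h := inner_sq_mul_norm_sq_le hnu Z
  rw [hqsq] at h
  have hsq : (inner ℝ n Z : ℝ) ^ 2 ≤ (‖n‖ * ‖Z‖ * projDist u Z) ^ 2 := by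
    refine le_of_mul_le_mul_right (h.trans ?_) (by positivity : 0 < ‖u‖ ^ 2)
    have := mul_le_mul_of_nonneg_left hsin (by positivity : 0 ≤ ‖n‖ ^ 2 * (‖u‖ * ‖Z‖) ^ 2)
    nlinarith
  exact abs_le_of_sq_le_sq hsq (by have := arccos_nonneg q; positivity)

lemma abs_inner_le_of_exists_projDist_lt {n Z : E3} {δ : ℝ}
    (h : ∃ u : E3, u ≠ 0 ∧ (inner ℝ n u : ℝ) = 0 ∧ projDist u Z < δ) :
    |(inner ℝ n Z : ℝ)| ≤ ‖n‖ * ‖Z‖ * δ := by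
  obtain ⟨u, hu, hnu, hδ⟩ := h
  exact (abs_inner_le_mul_projDist hu hnu Z).trans (by gcongr)

lemma norm_le_norm_liftP_mul_norm_dirOf {n : E3} {x : ℂ}
    (h : (inner ℝ n (liftP x) : ℝ) = 0) : ‖n‖ ≤ ‖liftP x‖ * ‖dirOf n‖ := by
  rw [inner_liftP] at h
  refine (pow_le_pow_iff_left₀ (norm_nonneg _) (by positivity) two_ne_zero).mp ?_
  rw [mul_pow, norm_sq_eq_sum_three, norm_liftP_sq, Complex.sq_norm, Complex.sq_norm,
    Complex.normSq_apply, Complex.normSq_apply, dirOf, show n 2 = -(n 0 * x.re + n 1 * x.im) by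
    linarith]
  nlinarith [sq_nonneg (n 0 * x.im - n 1 * x.re)]

lemma dirOf_ne_zero {n : E3} {x : ℂ} (hn : n ≠ 0) (h : (inner ℝ n (liftP x) : ℝ) = 0) :
    dirOf n ≠ 0 := by
  intro hd
  have := norm_le_norm_liftP_mul_norm_dirOf h
  rw [hd, norm_zero, mul_zero] at this
  exact hn (norm_le_zero_iff.mp this)

lemma infDist_affineTrace_mul_norm_dirOf_le (n : E3) (z : ℂ) :
    Metric.infDist z (affineTrace n) * ‖dirOf n‖ ≤ |(inner ℝ n (liftP z) : ℝ)| := by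
  rcases eq_or_ne (dirOf n) 0 with hd | hd
  · simp [hd]
  have hdsq : ‖dirOf n‖ ^ 2 = n 0 ^ 2 + n 1 ^ 2 := by
    rw [Complex.sq_norm, Complex.normSq_apply, dirOf]; ring
  have hdpos : 0 < ‖dirOf n‖ := norm_pos_iff.mpr hd
  set t := (inner ℝ n (liftP z) : ℝ) / ‖dirOf n‖ ^ 2
  have ht : t * ‖dirOf n‖ ^ 2 = inner ℝ n (liftP z) := div_mul_cancel₀ _ (by positivity)
  set p : ℂ := ⟨z.re - t * n 0, z.im - t * n 1⟩
  have hp : p ∈ affineTrace n := by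
    show (inner ℝ n (liftP p) : ℝ) = 0
    rw [inner_liftP] at ht ⊢
    rw [hdsq] at ht
    linear_combination -ht
  have hdist : dist z p * ‖dirOf n‖ = |(inner ℝ n (liftP z) : ℝ)| := by
    refine (sq_eq_sq₀ (by positivity) (abs_nonneg _)).mp ?_
    rw [sq_abs, ← ht, mul_pow, Complex.dist_eq, Complex.sq_norm, Complex.normSq_apply, hdsq]
    simp only [p, Complex.sub_re, Complex.sub_im]
    ring
  calc Metric.infDist z (affineTrace n) * ‖dirOf n‖ ≤ dist z p * ‖dirOf n‖ :=
        mul_le_mul_of_nonneg_right (Metric.infDist_le_dist_of_mem hp) hdpos.le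
    _ = _ := hdist

lemma infDist_affineTrace_le {r δ : ℝ} (hδ : 0 ≤ δ) {x z : ℂ} (hx : ‖x‖ ≤ r) {n : E3}
    (hn : n ≠ 0) (h : (inner ℝ n (liftP x) : ℝ) = 0)
    (hb : |(inner ℝ n (liftP z) : ℝ)| ≤ ‖n‖ * ‖liftP z‖ * δ) :
    Metric.infDist z (affineTrace n) ≤ √(1 + r ^ 2) * δ * √(1 + ‖z‖ ^ 2) := by
  have hd : 0 < ‖dirOf n‖ := norm_pos_iff.mpr (dirOf_ne_zero hn h)
  have hX : ‖liftP x‖ ≤ √(1 + r ^ 2) := by rw [norm_liftP]; gcongr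
  refine le_of_mul_le_mul_right ?_ hd
  calc Metric.infDist z (affineTrace n) * ‖dirOf n‖ ≤ |(inner ℝ n (liftP z) : ℝ)| :=
        infDist_affineTrace_mul_norm_dirOf_le n z
    _ ≤ ‖liftP x‖ * ‖dirOf n‖ * ‖liftP z‖ * δ := by
        grw [hb, norm_le_norm_liftP_mul_norm_dirOf h]
    _ ≤ √(1 + r ^ 2) * ‖dirOf n‖ * ‖liftP z‖ * δ := by grw [hX]
    _ = √(1 + r ^ 2) * δ * √(1 + ‖z‖ ^ 2) * ‖dirOf n‖ := by rw [norm_liftP]; ring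

lemma cross_eq_smul_liftP {n₁ n₂ : E3} {x : ℂ} (h₁ : (inner ℝ n₁ (liftP x) : ℝ) = 0)
    (h₂ : (inner ℝ n₂ (liftP x) : ℝ) = 0) : cross n₁ n₂ = cross n₁ n₂ 2 • liftP x := by
  set m := cross n₁ n₂
  have hmX : cross m (liftP x) = 0 := by
    simp [m, cross_cross_eq_inner_smul_sub_inner_smul, h₁, h₂]
  have hm : ‖liftP x‖ ^ 2 • m = (inner ℝ m (liftP x) : ℝ) • liftP x := by
    have h := cross_cross_eq_inner_smul_sub_inner_smul m (liftP x) (liftP x)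
    rw [hmX, cross_zero_left, real_inner_self_eq_norm_sq, eq_comm, sub_eq_zero] at h
    exact h.symm
  have hcoef : (inner ℝ m (liftP x) : ℝ) = ‖liftP x‖ ^ 2 * m 2 := by
    simpa using (congrArg (fun v : E3 => v 2) hm).symm
  have hX : ‖liftP x‖ ^ 2 ≠ 0 := by have := liftP_ne_zero x; positivity
  refine smul_right_injective E3 hX ?_
  simp only [hm, hcoef, smul_smul]

lemma abs_cross_apply_two_mul_norm_cross_le {n₁ n₂ : E3} {x : ℂ}
    (h₁ : (inner ℝ n₁ (liftP x) : ℝ) = 0) (h₂ : (inner ℝ n₂ (liftP x) : ℝ) = 0) (Z : E3) :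
    |cross n₁ n₂ 2| * ‖cross (liftP x) Z‖
      ≤ |(inner ℝ n₁ Z : ℝ)| * ‖n₂‖ + |(inner ℝ n₂ Z : ℝ)| * ‖n₁‖ :=
  calc |cross n₁ n₂ 2| * ‖cross (liftP x) Z‖ = ‖cross (cross n₁ n₂) Z‖ := by
        conv_rhs => rw [cross_eq_smul_liftP h₁ h₂]
        rw [cross_smul_left, norm_smul, Real.norm_eq_abs]
    _ = ‖(inner ℝ n₁ Z : ℝ) • n₂ - (inner ℝ n₂ Z : ℝ) • n₁‖ := by
        rw [cross_cross_eq_inner_smul_sub_inner_smul]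
    _ ≤ _ := (norm_sub_le _ _).trans_eq (by simp only [norm_smul, Real.norm_eq_abs])

lemma cross_apply_two_eq_dirOf (n₁ n₂ : E3) :
    cross n₁ n₂ 2 = (dirOf n₁).re * (dirOf n₂).im - (dirOf n₁).im * (dirOf n₂).re := by
  rw [cross_apply_two, dirOf, dirOf]; ring

lemma norm_sub_le_norm_cross_liftP (x z : ℂ) : ‖z - x‖ ≤ ‖cross (liftP x) (liftP z)‖ := by
  refine (pow_le_pow_iff_left₀ (norm_nonneg _) (norm_nonneg _) two_ne_zero).mp ?_
  rw [norm_sq_eq_sum_three, Complex.sq_norm, Complex.normSq_apply, cross_apply_zero,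
    cross_apply_one, cross_apply_two]
  simp only [liftP_apply_zero, liftP_apply_one, liftP_apply_two, Complex.sub_re, Complex.sub_im]
  nlinarith [sq_nonneg (x.re * z.im - x.im * z.re)]

lemma arccos_le_pi_div_two_mul_sqrt {q : ℝ} (hq : 0 ≤ q) :
    arccos q ≤ π / 2 * √(1 - q ^ 2) := by
  have h := mul_le_sin (arccos_nonneg q) (arccos_le_pi_div_two.mpr hq)
  rw [sin_arccos] at h
  calc arccos q = π / 2 * (2 / π * arccos q) := by field_simp
    _ ≤ π / 2 * √(1 - q ^ 2) := by gcongr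

lemma dirAngle_le_pi_div_two_mul {d₁ d₂ : ℂ} (h₁ : d₁ ≠ 0) (h₂ : d₂ ≠ 0) :
    dirAngle d₁ d₂ ≤ π / 2 * (|d₁.re * d₂.im - d₁.im * d₂.re| / (‖d₁‖ * ‖d₂‖)) := by
  have hD : 0 < ‖d₁‖ * ‖d₂‖ := by positivity
  have hsqrt : √(1 - (|realInner d₁ d₂| / (‖d₁‖ * ‖d₂‖)) ^ 2)
      = |d₁.re * d₂.im - d₁.im * d₂.re| / (‖d₁‖ * ‖d₂‖) := by
    rw [← sqrt_sq (by positivity : 0 ≤ |d₁.re * d₂.im - d₁.im * d₂.re| / (‖d₁‖ * ‖d₂‖))]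
    congr 1
    field_simp
    rw [sq_abs, sq_abs, Complex.sq_norm, Complex.sq_norm, Complex.normSq_apply,
      Complex.normSq_apply, realInner]
    ring
  exact (arccos_le_pi_div_two_mul_sqrt (by positivity)).trans_eq (by rw [hsqrt])

lemma dirAngle_dirOf_le {r δ : ℝ} (hr : 0 < r) (hδ : 0 ≤ δ) {x z : ℂ} (hx : ‖x‖ ≤ r)
    (hz : 2 * r < ‖z‖) {n₁ n₂ : E3} (hn₁ : n₁ ≠ 0) (hn₂ : n₂ ≠ 0)
    (h₁ : (inner ℝ n₁ (liftP x) : ℝ) = 0) (h₂ : (inner ℝ n₂ (liftP x) : ℝ) = 0)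
    (hb₁ : |(inner ℝ n₁ (liftP z) : ℝ)| ≤ ‖n₁‖ * ‖liftP z‖ * δ)
    (hb₂ : |(inner ℝ n₂ (liftP z) : ℝ)| ≤ ‖n₂‖ * ‖liftP z‖ * δ) :
    dirAngle (dirOf n₁) (dirOf n₂) ≤ π / 2 * (2 * (1 + r ^ 2) * (2 * r + 1) / r) * δ := by
  set X := liftP x
  set Z := liftP z
  set D := ‖dirOf n₁‖ * ‖dirOf n₂‖
  have hD : 0 < D := by
    have := dirOf_ne_zero hn₁ h₁; have := dirOf_ne_zero hn₂ h₂; positivity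
  have hX : ‖X‖ ^ 2 ≤ 1 + r ^ 2 := by rw [norm_liftP_sq]; gcongr
  have hZ : ‖Z‖ ≤ 1 + ‖z‖ := by
    rw [norm_liftP, sqrt_le_left (by positivity)]; nlinarith [norm_nonneg z]
  have hXZ : ‖z‖ / 2 ≤ ‖cross X Z‖ := by
    have := norm_sub_norm_le z x
    linarith [norm_sub_le_norm_cross_liftP x z]
  have hm : |cross n₁ n₂ 2| * ‖z‖ ≤ 4 * (1 + r ^ 2) * D * (1 + ‖z‖) * δ :=
    calc |cross n₁ n₂ 2| * ‖z‖ ≤ 2 * (|cross n₁ n₂ 2| * ‖cross X Z‖) := by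
          nlinarith [abs_nonneg (cross n₁ n₂ 2)]
      _ ≤ 2 * (|(inner ℝ n₁ Z : ℝ)| * ‖n₂‖ + |(inner ℝ n₂ Z : ℝ)| * ‖n₁‖) := by
          grw [abs_cross_apply_two_mul_norm_cross_le h₁ h₂ Z]
      _ ≤ 2 * (‖n₁‖ * ‖Z‖ * δ * ‖n₂‖ + ‖n₂‖ * ‖Z‖ * δ * ‖n₁‖) := by grw [hb₁, hb₂]
      _ = 4 * ‖n₁‖ * ‖n₂‖ * ‖Z‖ * δ := by ring
      _ ≤ 4 * (‖X‖ * ‖dirOf n₁‖) * (‖X‖ * ‖dirOf n₂‖) * (1 + ‖z‖) * δ := by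
          grw [norm_le_norm_liftP_mul_norm_dirOf h₁, norm_le_norm_liftP_mul_norm_dirOf h₂, hZ]
      _ = 4 * ‖X‖ ^ 2 * D * (1 + ‖z‖) * δ := by ring
      _ ≤ 4 * (1 + r ^ 2) * D * (1 + ‖z‖) * δ := by grw [hX]
  have hsin : |cross n₁ n₂ 2| / D ≤ 2 * (1 + r ^ 2) * (2 * r + 1) / r * δ := by
    rw [div_le_iff₀ hD]
    refine le_of_mul_le_mul_right ?_ (mul_pos hr (hr.trans (by linarith) : 0 < ‖z‖))
    calc |cross n₁ n₂ 2| * (r * ‖z‖) = r * (|cross n₁ n₂ 2| * ‖z‖) := by ring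
      _ ≤ r * (4 * (1 + r ^ 2) * D * (1 + ‖z‖) * δ) := by gcongr
      _ = 2 * (1 + r ^ 2) * D * δ * (2 * r * (1 + ‖z‖)) := by ring
      _ ≤ 2 * (1 + r ^ 2) * D * δ * ((2 * r + 1) * ‖z‖) := by
          gcongr 2 * (1 + r ^ 2) * D * δ * ?_; linarith
      _ = 2 * (1 + r ^ 2) * (2 * r + 1) / r * δ * D * (r * ‖z‖) := by field_simp
  calc dirAngle (dirOf n₁) (dirOf n₂) ≤ π / 2 * (|cross n₁ n₂ 2| / D) := by
        rw [cross_apply_two_eq_dirOf]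
        exact dirAngle_le_pi_div_two_mul (dirOf_ne_zero hn₁ h₁) (dirOf_ne_zero hn₂ h₂)
    _ ≤ π / 2 * (2 * (1 + r ^ 2) * (2 * r + 1) / r * δ) := by grw [hsin]
    _ = π / 2 * (2 * (1 + r ^ 2) * (2 * r + 1) / r) * δ := by ring
/-- Projective lines through a point `x ∈ ℝ² ⊆ ℙ²` with `|x| ≤ r` that pass near a
point `z` with `|z| > 2r`: there are constants `c₂, c₃` (and `c`) depending only on `r`
such that for all sufficiently small `δ > 0`, any two projective lines through `x`
meeting the projective ball `B(z, δ)` make a Euclidean angle `≤ c₂ c₃ δ` in `ℝ²`;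
consequently any line `ν` through `x` meeting `B(z, δ)` satisfies
`dist(z, ν) ≤ c δ √(1 + |z|²)` in `ℝ²`. -/
theorem projective_lines_near_point (r : ℝ) (hr : 0 < r) :
    ∃ c₂ c₃ c δ₀ : ℝ, 0 < c₂ ∧ 0 < c₃ ∧ 0 < c ∧ 0 < δ₀ ∧
      ∀ δ : ℝ, 0 < δ → δ < δ₀ →
        ∀ x z : ℂ, ‖x‖ ≤ r → 2 * r < ‖z‖ →
          (∀ n₁ n₂ : EuclideanSpace ℝ (Fin 3), n₁ ≠ 0 → n₂ ≠ 0 →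
            (inner ℝ n₁ (liftP x) : ℝ) = 0 → (inner ℝ n₂ (liftP x) : ℝ) = 0 →
            (∃ u₁ : EuclideanSpace ℝ (Fin 3), u₁ ≠ 0 ∧ (inner ℝ n₁ u₁ : ℝ) = 0 ∧
              projDist u₁ (liftP z) < δ) →
            (∃ u₂ : EuclideanSpace ℝ (Fin 3), u₂ ≠ 0 ∧ (inner ℝ n₂ u₂ : ℝ) = 0 ∧
              projDist u₂ (liftP z) < δ) →
            dirAngle (dirOf n₁) (dirOf n₂) ≤ c₂ * c₃ * δ) ∧
          (∀ n : EuclideanSpace ℝ (Fin 3), n ≠ 0 →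
            (inner ℝ n (liftP x) : ℝ) = 0 →
            (∃ u : EuclideanSpace ℝ (Fin 3), u ≠ 0 ∧ (inner ℝ n u : ℝ) = 0 ∧
              projDist u (liftP z) < δ) →
            Metric.infDist z (affineTrace n) ≤ c * δ * Real.sqrt (1 + ‖z‖ ^ 2)) := by
  refine ⟨π / 2, 2 * (1 + r ^ 2) * (2 * r + 1) / r, √(1 + r ^ 2), 1,
    by positivity, by positivity, by positivity, one_pos, ?_⟩
  intro δ hδ _ x z hx hz
  refine ⟨fun n₁ n₂ hn₁ hn₂ h₁ h₂ hu₁ hu₂ => ?_, fun n hn h hu => ?_⟩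
  · exact dirAngle_dirOf_le hr hδ.le hx hz hn₁ hn₂ h₁ h₂
      (abs_inner_le_of_exists_projDist_lt hu₁) (abs_inner_le_of_exists_projDist_lt hu₂)
  · exact infDist_affineTrace_le hδ.le hx hn h (abs_inner_le_of_exists_projDist_lt hu)

end
end
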